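/- Let (D_cf, C_cf) be any cut-free cycle-normal CLKID^ω_a proof of the sequent Add2(x,y,z) ⊢ Add1(x,y,z). For every infinite index path (Γ_i ⊢ Δ_i)_{i ≥ 0} in the tree-unfolding of (D_cf, C_cf), there exists l ∈ ℕ such that Γ_l ⊢ Δ_l is a switching point and Γ_{l+1} ⊢ Δ_{l+1} is the right assumption of the (Case Add2) rule with conclusion Γ_l ⊢ Δ_l. -/

import Mathlib

namespace CLKID

/-- Terms of the language: variables, the constant `0`, and the unary function `s`. -/
inductive Tm : Type where
  | var : ℕ → Tm
  | zero : Tm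
  | s : Tm → Tm
deriving DecidableEq

/-- `sIter n t` is the term `s^n t`. -/
def sIter : ℕ → Tm → Tm
  | 0, t => t
  | n + 1, t => Tm.s (sIter n t)

/-- Substitution on terms. -/
def Tm.subst (θ : ℕ → Tm) : Tm → Tm
  | .var x => θ x
  | .zero => .zero
  | .s t => .s (t.subst θ)

/-- Free variables of a term. -/
def Tm.fv : Tm → Set ℕ
  | .var x => {x}
  | .zero => ∅
  | .s t => t.fv

/-- Subterms of a term. -/
def Tm.sub : Tm → Set Tm
  | .var x => {Tm.var x}
  | .zero => {Tm.zero}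
  | .s t => insert (Tm.s t) t.sub

/-- The variable of a term (`none` if the term is of the form `s^n 0`). -/
def Tm.varOf : Tm → Option ℕ
  | .var x => some x
  | .zero => none
  | .s t => t.varOf

/-- Formulas: equations, the two inductive-predicate atoms `Add1`/`Add2`,
    and the usual first-order connectives and quantifiers. -/
inductive Fm : Type where
  | eq : Tm → Tm → Fm
  | add1 : Tm → Tm → Tm → Fm
  | add2 : Tm → Tm → Tm → Fm
  | not : Fm → Fm
  | and : Fm → Fm → Fm
  | or : Fm → Fm → Fm
  | imp : Fm → Fm → Fm
  | all : ℕ → Fm → Fm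
  | ex : ℕ → Fm → Fm
deriving DecidableEq

/-- Substitution on formulas. -/
def Fm.subst (θ : ℕ → Tm) : Fm → Fm
  | .eq t u => .eq (t.subst θ) (u.subst θ)
  | .add1 a b c => .add1 (a.subst θ) (b.subst θ) (c.subst θ)
  | .add2 a b c => .add2 (a.subst θ) (b.subst θ) (c.subst θ)
  | .not φ => .not (φ.subst θ)
  | .and φ ψ => .and (φ.subst θ) (ψ.subst θ)
  | .or φ ψ => .or (φ.subst θ) (ψ.subst θ)
  | .imp φ ψ => .imp (φ.subst θ) (ψ.subst θ)
  | .all x φ => .all x (φ.subst (Function.update θ x (Tm.var x)))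
  | .ex x φ => .ex x (φ.subst (Function.update θ x (Tm.var x)))

/-- Free variables of a formula. -/
def Fm.fv : Fm → Set ℕ
  | .eq t u => t.fv ∪ u.fv
  | .add1 a b c => a.fv ∪ b.fv ∪ c.fv
  | .add2 a b c => a.fv ∪ b.fv ∪ c.fv
  | .not φ => φ.fv
  | .and φ ψ => φ.fv ∪ ψ.fv
  | .or φ ψ => φ.fv ∪ ψ.fv
  | .imp φ ψ => φ.fv ∪ ψ.fv
  | .all x φ => φ.fv \ {x}
  | .ex x φ => φ.fv \ {x}

/-- Terms occurring in a formula. -/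
def Fm.tms : Fm → Set Tm
  | .eq t u => t.sub ∪ u.sub
  | .add1 a b c => a.sub ∪ b.sub ∪ c.sub
  | .add2 a b c => a.sub ∪ b.sub ∪ c.sub
  | .not φ => φ.tms
  | .and φ ψ => φ.tms ∪ ψ.tms
  | .or φ ψ => φ.tms ∪ ψ.tms
  | .imp φ ψ => φ.tms ∪ ψ.tms
  | .all _ φ => φ.tms
  | .ex _ φ => φ.tms

/-- The substitution `[x := t]`. -/
def sub1 (x : ℕ) (t : Tm) : ℕ → Tm := fun y => if y = x then t else Tm.var y

/-- The simultaneous substitution `[v1 := t, v2 := u]`. -/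
def sub2 (v1 v2 : ℕ) (t u : Tm) : ℕ → Tm :=
  fun z => if z = v1 then t else if z = v2 then u else Tm.var z

/-- `≡_Γ`: the smallest congruence relation on terms containing all pairs `(t, u)`
    with the equation `t = u` in `Γ`. -/
inductive EqvTm (Γ : Set Fm) : Tm → Tm → Prop where
  | base {t u : Tm} : Fm.eq t u ∈ Γ → EqvTm Γ t u
  | refl (t : Tm) : EqvTm Γ t t
  | symm {t u : Tm} : EqvTm Γ t u → EqvTm Γ u t
  | trans {t u v : Tm} : EqvTm Γ t u → EqvTm Γ u v → EqvTm Γ t v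
  | sCongr {t u : Tm} : EqvTm Γ t u → EqvTm Γ (Tm.s t) (Tm.s u)

/-- `t ~_Γ u` : `s^n t ≡_Γ s^m u` for some naturals `n`, `m`. -/
def DepTm (Γ : Set Fm) (t u : Tm) : Prop := ∃ n m : ℕ, EqvTm Γ (sIter n t) (sIter m u)

/-- A sequent: a pair of finite sets of formulas. -/
structure Seq where
  ant : Finset Fm
  suc : Finset Fm

/-- The antecedent of a sequent, as a set of formulas. -/
def antSet (S : Seq) : Set Fm := ↑S.ant

/-- `[Γ]` from Lemma on chains: `{ s^n t1 = s^n t2 | t1 = t2 ∈ Γ or t2 = t1 ∈ Γ }`. -/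
def brkt (Γ : Set Fm) : Set Fm :=
  {φ | ∃ (n : ℕ) (t1 t2 : Tm), φ = Fm.eq (sIter n t1) (sIter n t2) ∧
        (Fm.eq t1 t2 ∈ Γ ∨ Fm.eq t2 t1 ∈ Γ)}

/-- `B1(Γ ⊢ Δ)` : second arguments of `Add1` atoms in the consequent. -/
def B1 (S : Seq) : Set Tm := {b | ∃ a c, Fm.add1 a b c ∈ S.suc}

/-- `C(Γ ⊢ Δ)` : third arguments of `Add2` atoms in the antecedent
    or `Add1` atoms in the consequent. -/
def Cset (S : Seq) : Set Tm :=
  {c | (∃ a b, Fm.add2 a b c ∈ S.ant) ∨ (∃ a b, Fm.add1 a b c ∈ S.suc)}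

/-- Index sequent. -/
def IndexSequent (S : Seq) : Prop :=
  (∀ t ∈ B1 S, ∀ u ∈ Cset S, ¬ DepTm (antSet S) t u) ∧
  (∀ b ∈ B1 S, ∀ b' ∈ B1 S, ∀ n m : ℕ, EqvTm (antSet S) (sIter n b) (sIter m b') → n = m)

/-! ## The cyclic proof systems `CLKID^ω` and `CLKID^ω_a` -/

/-- Rule labels; each label carries the instance data needed to describe the
    rule application (principal formulas, substitutions, case variables, ...).
    `bud` labels bud leaves of cyclic derivation trees. -/
inductive Rule : Type where
  | ax
  | weak
  | cut (φ : Fm)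
  | subst (θ : ℕ → Tm)
  | negL (φ : Fm)
  | negR (φ : Fm)
  | andL (φ ψ : Fm)
  | andR (φ ψ : Fm)
  | orL (φ ψ : Fm)
  | orR (φ ψ : Fm)
  | impL (φ ψ : Fm)
  | impR (φ ψ : Fm)
  | allL (x : ℕ) (t : Tm) (φ : Fm)
  | allR (x : ℕ) (φ : Fm)
  | exL (x : ℕ) (φ : Fm)
  | exR (x : ℕ) (t : Tm) (φ : Fm)
  | eqR (t : Tm)
  | eqL (v1 v2 : ℕ) (t u : Tm)
  | eqLa (v1 v2 : ℕ) (t u : Tm)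
  | add1R1
  | add1R2 (a b c : Tm)
  | add2R1
  | add2R2 (a b c : Tm)
  | caseAdd1 (a b c : Tm) (x y z : ℕ)
  | caseAdd2 (a b c : Tm) (x y z : ℕ)
  | bud

/-- `Inf r S L` : the sequent `S` follows from the list of premises `L`
    by the rule (instance) `r`. -/
inductive Inf : Rule → Seq → List Seq → Prop where
  | ax {Γ Δ : Finset Fm} :
      (Γ ∩ Δ).Nonempty → Inf .ax ⟨Γ, Δ⟩ []
  | weak {Γ Δ Γ' Δ' : Finset Fm} :
      Γ' ⊆ Γ → Δ' ⊆ Δ → Inf .weak ⟨Γ, Δ⟩ [⟨Γ', Δ'⟩]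
  | cut {Γ Δ : Finset Fm} {φ : Fm} :
      Inf (.cut φ) ⟨Γ, Δ⟩ [⟨Γ, insert φ Δ⟩, ⟨insert φ Γ, Δ⟩]
  | subst {Γ Δ : Finset Fm} {θ : ℕ → Tm} :
      Inf (.subst θ) ⟨Γ.image (Fm.subst θ), Δ.image (Fm.subst θ)⟩ [⟨Γ, Δ⟩]
  | negL {Γ Δ : Finset Fm} {φ : Fm} :
      Inf (.negL φ) ⟨insert (.not φ) Γ, Δ⟩ [⟨Γ, insert φ Δ⟩]
  | negR {Γ Δ : Finset Fm} {φ : Fm} :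
      Inf (.negR φ) ⟨Γ, insert (.not φ) Δ⟩ [⟨insert φ Γ, Δ⟩]
  | andL {Γ Δ : Finset Fm} {φ ψ : Fm} :
      Inf (.andL φ ψ) ⟨insert (.and φ ψ) Γ, Δ⟩ [⟨insert φ (insert ψ Γ), Δ⟩]
  | andR {Γ Δ : Finset Fm} {φ ψ : Fm} :
      Inf (.andR φ ψ) ⟨Γ, insert (.and φ ψ) Δ⟩ [⟨Γ, insert φ Δ⟩, ⟨Γ, insert ψ Δ⟩]
  | orL {Γ Δ : Finset Fm} {φ ψ : Fm} :
      Inf (.orL φ ψ) ⟨insert (.or φ ψ) Γ, Δ⟩ [⟨insert φ Γ, Δ⟩, ⟨insert ψ Γ, Δ⟩]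
  | orR {Γ Δ : Finset Fm} {φ ψ : Fm} :
      Inf (.orR φ ψ) ⟨Γ, insert (.or φ ψ) Δ⟩ [⟨Γ, insert φ (insert ψ Δ)⟩]
  | impL {Γ Δ : Finset Fm} {φ ψ : Fm} :
      Inf (.impL φ ψ) ⟨insert (.imp φ ψ) Γ, Δ⟩ [⟨Γ, insert φ Δ⟩, ⟨insert ψ Γ, Δ⟩]
  | impR {Γ Δ : Finset Fm} {φ ψ : Fm} :
      Inf (.impR φ ψ) ⟨Γ, insert (.imp φ ψ) Δ⟩ [⟨insert φ Γ, insert ψ Δ⟩]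
  | allL {Γ Δ : Finset Fm} {x : ℕ} {t : Tm} {φ : Fm} :
      Inf (.allL x t φ) ⟨insert (.all x φ) Γ, Δ⟩ [⟨insert (φ.subst (sub1 x t)) Γ, Δ⟩]
  | allR {Γ Δ : Finset Fm} {x : ℕ} {φ : Fm} :
      (∀ ψ ∈ Γ ∪ Δ, x ∉ Fm.fv ψ) →
      Inf (.allR x φ) ⟨Γ, insert (.all x φ) Δ⟩ [⟨Γ, insert φ Δ⟩]
  | exL {Γ Δ : Finset Fm} {x : ℕ} {φ : Fm} :
      (∀ ψ ∈ Γ ∪ Δ, x ∉ Fm.fv ψ) →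
      Inf (.exL x φ) ⟨insert (.ex x φ) Γ, Δ⟩ [⟨insert φ Γ, Δ⟩]
  | exR {Γ Δ : Finset Fm} {x : ℕ} {t : Tm} {φ : Fm} :
      Inf (.exR x t φ) ⟨Γ, insert (.ex x φ) Δ⟩ [⟨Γ, insert (φ.subst (sub1 x t)) Δ⟩]
  | eqR {Γ Δ : Finset Fm} {t : Tm} :
      Inf (.eqR t) ⟨Γ, insert (.eq t t) Δ⟩ []
  | eqL {Γ Δ : Finset Fm} {v1 v2 : ℕ} {t u : Tm} :
      Inf (.eqL v1 v2 t u)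
        ⟨insert (.eq t u) (Γ.image (Fm.subst (sub2 v1 v2 t u))),
          Δ.image (Fm.subst (sub2 v1 v2 t u))⟩
        [⟨Γ.image (Fm.subst (sub2 v1 v2 u t)), Δ.image (Fm.subst (sub2 v1 v2 u t))⟩]
  | eqLa {Γ Δ : Finset Fm} {v1 v2 : ℕ} {t u : Tm} :
      Inf (.eqLa v1 v2 t u)
        ⟨insert (.eq t u) (Γ.image (Fm.subst (sub2 v1 v2 t u))),
          Δ.image (Fm.subst (sub2 v1 v2 t u))⟩
        [⟨insert (.eq t u) (Γ.image (Fm.subst (sub2 v1 v2 u t))),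
          Δ.image (Fm.subst (sub2 v1 v2 u t))⟩]
  | add1R1 {Γ Δ : Finset Fm} {b : Tm} :
      Inf .add1R1 ⟨Γ, insert (.add1 .zero b b) Δ⟩ []
  | add1R2 {Γ Δ : Finset Fm} {a b c : Tm} :
      Inf (.add1R2 a b c) ⟨Γ, insert (.add1 (.s a) b (.s c)) Δ⟩ [⟨Γ, insert (.add1 a b c) Δ⟩]
  | add2R1 {Γ Δ : Finset Fm} {b : Tm} :
      Inf .add2R1 ⟨Γ, insert (.add2 .zero b b) Δ⟩ []
  | add2R2 {Γ Δ : Finset Fm} {a b c : Tm} :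
      Inf (.add2R2 a b c) ⟨Γ, insert (.add2 (.s a) b c) Δ⟩ [⟨Γ, insert (.add2 a (.s b) c) Δ⟩]
  | caseAdd1 {Γ Δ : Finset Fm} {a b c : Tm} {x y z : ℕ} :
      x ≠ y → x ≠ z → y ≠ z →
      (∀ ψ ∈ insert (Fm.add1 a b c) (Γ ∪ Δ), x ∉ Fm.fv ψ ∧ y ∉ Fm.fv ψ ∧ z ∉ Fm.fv ψ) →
      Inf (.caseAdd1 a b c x y z) ⟨insert (.add1 a b c) Γ, Δ⟩
        [⟨insert (.eq a .zero) (insert (.eq b (.var y)) (insert (.eq c (.var y)) Γ)), Δ⟩,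
         ⟨insert (.eq a (.s (.var x))) (insert (.eq b (.var y)) (insert (.eq c (.s (.var z)))
            (insert (.add1 (.var x) (.var y) (.var z)) Γ))), Δ⟩]
  | caseAdd2 {Γ Δ : Finset Fm} {a b c : Tm} {x y z : ℕ} :
      x ≠ y → x ≠ z → y ≠ z →
      (∀ ψ ∈ insert (Fm.add2 a b c) (Γ ∪ Δ), x ∉ Fm.fv ψ ∧ y ∉ Fm.fv ψ ∧ z ∉ Fm.fv ψ) →
      Inf (.caseAdd2 a b c x y z) ⟨insert (.add2 a b c) Γ, Δ⟩
        [⟨insert (.eq a .zero) (insert (.eq b (.var y)) (insert (.eq c (.var y)) Γ)), Δ⟩,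
         ⟨insert (.eq a (.s (.var x))) (insert (.eq b (.var y)) (insert (.eq c (.var z))
            (insert (.add2 (.var x) (.s (.var y)) (.var z)) Γ))), Δ⟩]

/-- A labeling of tree nodes (finite sequences of naturals) by sequents and rules;
    `none` means the node is not in the tree. -/
abbrev Lbl : Type := List ℕ → Option (Seq × Rule)

/-- The children of `σ` are labeled exactly by the premise list `prems`. -/
def childrenOK (f : Lbl) (σ : List ℕ) (prems : List Seq) : Prop :=
  (∀ i : Fin prems.length, ∃ r', f (σ ++ [(i : ℕ)]) = some (prems.get i, r')) ∧
  (∀ i : ℕ, prems.length ≤ i → f (σ ++ [i]) = none)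

/-- Derivation trees (possibly infinite): prefix-closed domain, each non-bud node
    is the conclusion of a rule whose premises label its children, buds are leaves. -/
structure DTree where
  label : Lbl
  root_def : label [] ≠ none
  prefix_closed : ∀ σ τ : List ℕ, label (σ ++ τ) ≠ none → label σ ≠ none
  wf : ∀ σ S r, label σ = some (S, r) →
    (r = Rule.bud ∧ ∀ i : ℕ, label (σ ++ [i]) = none) ∨
    (r ≠ Rule.bud ∧ ∃ prems, Inf r S prems ∧ childrenOK label σ prems)

/-- `σ` is a bud of the labeling `f`. -/
def budAt (f : Lbl) (σ : List ℕ) : Prop := ∃ S, f σ = some (S, Rule.bud)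

/-- `σ` is an inner node of `f` labeled with the sequent `S`. -/
def innerWith (f : Lbl) (σ : List ℕ) (S : Seq) : Prop :=
  ∃ r, f σ = some (S, r) ∧ r ≠ Rule.bud

/-- A pre-proof: a finite derivation tree together with a function assigning to
    each bud a companion, i.e. an inner node labeled with the same sequent. -/
structure PreProof where
  D : DTree
  fin : {σ : List ℕ | D.label σ ≠ none}.Finite
  C : List ℕ → List ℕ
  comp : ∀ σ S, D.label σ = some (S, Rule.bud) → innerWith D.label (C σ) S

/-- Cycle-normality: every companion is an ancestor of its bud. -/
def PreProof.CycleNormal (P : PreProof) : Prop :=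
  ∀ σ S, P.D.label σ = some (S, Rule.bud) → P.C σ <+: σ

/-- `T` is the tree-unfolding of the pre-proof `P`: it agrees with `P.D` on
    non-bud nodes, below a bud it continues as below the bud's companion, and it
    is empty on nodes not in `P.D` having no bud prefix. -/
def IsUnfolding (P : PreProof) (T : Lbl) : Prop :=
  (∀ σ, P.D.label σ ≠ none → ¬ budAt P.D.label σ → T σ = P.D.label σ) ∧
  (∀ σ₁ σ₂ : List ℕ, budAt P.D.label σ₁ → T (σ₁ ++ σ₂) = T (P.C σ₁ ++ σ₂)) ∧
  (∀ σ, P.D.label σ = none → (∀ σ₁, σ₁ <+: σ → ¬ budAt P.D.label σ₁) → T σ = none)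

/-- An infinite path in the labeling `f`. -/
def IsInfPath (f : Lbl) (p : ℕ → List ℕ) : Prop :=
  (∀ i, f (p i) ≠ none) ∧ (∀ i, ∃ n : ℕ, p (i + 1) = p i ++ [n])

/-- Atomic formulas with an inductive predicate. -/
def isIndAtom (φ : Fm) : Prop :=
  (∃ a b c, φ = Fm.add1 a b c) ∨ (∃ a b c, φ = Fm.add2 a b c)

/-- A progressing trace step: the traced formula is the principal formula of a
    case rule and its successor (in the corresponding case distinction, child `j`)
    is a case-descendant. -/
def progStep : Rule → ℕ → Fm → Fm → Prop := fun r j τ τ' =>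
  match r with
  | .caseAdd1 a b c x y z =>
      τ = Fm.add1 a b c ∧ j = 1 ∧ τ' = Fm.add1 (.var x) (.var y) (.var z)
  | .caseAdd2 a b c x y z =>
      τ = Fm.add2 a b c ∧ j = 1 ∧ τ' = Fm.add2 (.var x) (.s (.var y)) (.var z)
  | _ => False

/-- The trace connection relation between the traced formula at a conclusion of a
    rule `r` and the traced formula at its `j`-th premise. -/
def connStep : Rule → ℕ → Fm → Fm → Prop := fun r j τ τ' =>
  match r with
  | .subst θ => τ = Fm.subst θ τ'
  | .eqL v1 v2 t u =>
      ∃ F : Fm, τ = Fm.subst (sub2 v1 v2 t u) F ∧ τ' = Fm.subst (sub2 v1 v2 u t) F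
  | .eqLa v1 v2 t u =>
      ∃ F : Fm, τ = Fm.subst (sub2 v1 v2 t u) F ∧ τ' = Fm.subst (sub2 v1 v2 u t) F
  | .caseAdd1 a b c x y z => τ' = τ ∨ progStep (.caseAdd1 a b c x y z) j τ τ'
  | .caseAdd2 a b c x y z => τ' = τ ∨ progStep (.caseAdd2 a b c x y z) j τ τ'
  | _ => τ' = τ

/-- `τ` is a trace following the tail from `k` of the path `p` in `f`. -/
def IsTraceFrom (f : Lbl) (p : ℕ → List ℕ) (k : ℕ) (τ : ℕ → Fm) : Prop :=
  ∀ i, k ≤ i →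
    ∃ (S : Seq) (r : Rule) (j : ℕ), f (p i) = some (S, r) ∧ τ i ∈ S.ant ∧ isIndAtom (τ i) ∧
      p (i + 1) = p i ++ [j] ∧ connStep r j (τ i) (τ (i + 1))

/-- The trace `τ` progresses at position `i` of the path `p`. -/
def progAt (f : Lbl) (p : ℕ → List ℕ) (τ : ℕ → Fm) (i : ℕ) : Prop :=
  ∃ (S : Seq) (r : Rule) (j : ℕ), f (p i) = some (S, r) ∧ p (i + 1) = p i ++ [j] ∧
    progStep r j (τ i) (τ (i + 1))

/-- The global trace condition for a (possibly infinite) labeling `f`. -/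
def GTC (f : Lbl) : Prop :=
  ∀ p : ℕ → List ℕ, IsInfPath f p →
    ∃ (k : ℕ) (τ : ℕ → Fm), IsTraceFrom f p k τ ∧
      ∀ n : ℕ, ∃ i, n ≤ i ∧ k ≤ i ∧ progAt f p τ i

/-- A pre-proof is a proof when its tree-unfolding satisfies the
    global trace condition. -/
def PreProof.IsProof (P : PreProof) : Prop := ∃ T : Lbl, IsUnfolding P T ∧ GTC T

/-- Some rule satisfying `Q` occurs in the labeling `f`. -/
def usesRule (f : Lbl) (Q : Rule → Prop) : Prop := ∃ σ S r, f σ = some (S, r) ∧ Q r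

/-- No occurrence of (Cut). -/
def PreProof.CutFree (P : PreProof) : Prop :=
  ¬ usesRule P.D.label (fun r => ∃ φ, r = Rule.cut φ)

/-- No occurrence of (= L_a): the pre-proof is a `CLKID^ω` pre-proof. -/
def PreProof.NoEqLa (P : PreProof) : Prop :=
  ¬ usesRule P.D.label (fun r => ∃ v1 v2 t u, r = Rule.eqLa v1 v2 t u)

/-- No occurrence of (= L): the pre-proof is a `CLKID^ω_a` pre-proof. -/
def PreProof.NoEqL (P : PreProof) : Prop :=
  ¬ usesRule P.D.label (fun r => ∃ v1 v2 t u, r = Rule.eqL v1 v2 t u)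

/-- The conclusion of the pre-proof is the sequent `S`. -/
def PreProof.Concl (P : PreProof) (S : Seq) : Prop := ∃ r, P.D.label [] = some (S, r)

/-- Provability in `CLKID^ω`. -/
def ProvableW (S : Seq) : Prop :=
  ∃ P : PreProof, P.IsProof ∧ P.NoEqLa ∧ P.Concl S

/-- Provability in `CLKID^ω_a`. -/
def ProvableWa (S : Seq) : Prop :=
  ∃ P : PreProof, P.IsProof ∧ P.NoEqL ∧ P.Concl S

/-- Cut-free provability in `CLKID^ω`. -/
def CutFreeProvableW (S : Seq) : Prop :=
  ∃ P : PreProof, P.IsProof ∧ P.CutFree ∧ P.NoEqLa ∧ P.Concl S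

/-- The sequent `Add2(x, y, z) ⊢ Add1(x, y, z)`. -/
def goalSeq : Seq :=
  ⟨{Fm.add2 (Tm.var 0) (Tm.var 1) (Tm.var 2)}, {Fm.add1 (Tm.var 0) (Tm.var 1) (Tm.var 2)}⟩

/-- A cut-free cycle-normal `CLKID^ω_a` proof of `Add2(x,y,z) ⊢ Add1(x,y,z)`. -/
def IsCNProofOfGoal (P : PreProof) : Prop :=
  P.IsProof ∧ P.CutFree ∧ P.NoEqL ∧ P.CycleNormal ∧ P.Concl goalSeq

/-- The index of an `Add2` atom with second argument `b` in the sequent `S` is `⊥`. -/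
def IndexBot (S : Seq) (b : Tm) : Prop :=
  ∀ a' b' c', Fm.add1 a' b' c' ∈ S.suc → ¬ DepTm (antSet S) b b'

/-- `σ` is a switching point of `f`: the conclusion of a `(Case Add2)` rule whose
    principal formula has index `⊥`. -/
def SwitchingPoint (f : Lbl) (σ : List ℕ) : Prop :=
  ∃ S a b c x y z, f σ = some (S, Rule.caseAdd2 a b c x y z) ∧ IndexBot S b

/-- `σ` is the conclusion of a `(Case Add2)` rule in `f`. -/
def CaseAdd2At (f : Lbl) (σ : List ℕ) : Prop :=
  ∃ S a b c x y z, f σ = some (S, Rule.caseAdd2 a b c x y z)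

/-- The node `σ` of `f` is labeled with an index sequent. -/
def IndexSequentAt (f : Lbl) (σ : List ℕ) : Prop :=
  ∃ S r, f σ = some (S, r) ∧ IndexSequent S

/-- A finite index path `p 0, …, p N` in `f`:  its first sequent is an index
    sequent, and a step to the left premise (child `0`) of a `(Case Add2)` rule
    only happens at switching points. -/
def IsIndexPathUpTo (f : Lbl) (p : ℕ → List ℕ) (N : ℕ) : Prop :=
  (∀ i, i ≤ N → f (p i) ≠ none) ∧
  (∀ i, i < N → ∃ n : ℕ, p (i + 1) = p i ++ [n]) ∧
  IndexSequentAt f (p 0) ∧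
  (∀ i, i < N → CaseAdd2At f (p i) → p (i + 1) = p i ++ [0] → SwitchingPoint f (p i))

/-- An infinite index path in `f`. -/
def IsInfIndexPath (f : Lbl) (p : ℕ → List ℕ) : Prop :=
  IsInfPath f p ∧
  IndexSequentAt f (p 0) ∧
  (∀ i, CaseAdd2At f (p i) → p (i + 1) = p i ++ [0] → SwitchingPoint f (p i))

/-- The child index chosen by the rightmost path: the right assumption of
    `(Case Add2)`, the unique premise otherwise. -/
def rightIdx : Rule → ℕ := fun r =>
  match r with
  | .caseAdd2 _ _ _ _ _ _ => 1
  | _ => 0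

/-- One step of the rightmost path in `f`. -/
def RightStep (f : Lbl) (σ σ' : List ℕ) : Prop :=
  ∃ S r, f σ = some (S, r) ∧ σ' = σ ++ [rightIdx r] ∧ f σ' ≠ none

/-- `A(Γ ⊢ Δ)` of Lemma `abc_relations`. -/
def Aset (S : Seq) : Set Tm :=
  {a | (∃ b c, Fm.add2 a b c ∈ S.ant) ∨ (∃ b c, Fm.add1 a b c ∈ S.suc) ∨ a = Tm.zero}

/-- `BC(Γ ⊢ Δ)` of Lemma `abc_relations`. -/
def BCset (S : Seq) : Set Tm :=
  {t | (∃ a c, Fm.add2 a t c ∈ S.ant) ∨ (∃ a b, Fm.add2 a b t ∈ S.ant) ∨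
       (∃ a c, Fm.add1 a t c ∈ S.suc) ∨ (∃ a b, Fm.add1 a b t ∈ S.suc)}

/-- The rules that can occur in a cut-free cycle-normal `CLKID^ω_a` proof of
    `Add2(x,y,z) ⊢ Add1(x,y,z)` (plus bud labels). -/
def allowedRule (r : Rule) : Prop :=
  r = Rule.bud ∨ r = Rule.weak ∨ (∃ θ, r = Rule.subst θ) ∨
  (∃ v1 v2 t u, r = Rule.eqLa v1 v2 t u) ∨
  (∃ a b c x y z, r = Rule.caseAdd2 a b c x y z) ∨
  r = Rule.add1R1 ∨ (∃ a b c, r = Rule.add1R2 a b c)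

/-!
Every sequent of such a proof has only equations and `Add2` atoms on the left and `Add1` atoms
on the right, and its first arguments (and `0`) are never `~`-related to its second or third
arguments; this invariant passes from conclusions to premises of every rule that can occur.
Along an index path the index-sequent property passes to premises as well: at a left
assumption of (Case Add2) the switching-point condition is exactly what is needed.

The global trace condition provides a trace that eventually consists of `Add2` atoms. Reading
the index of the traced atom from a premise back to its conclusion, it is unchanged by
non-progressing steps and drops by one at each progress point, i.e. at each passage to the
right assumption of a (Case Add2). If no such point were a switching point, the index would be
defined at all of them. The unfolding of a finite proof has finitely many labels, so two
progress points carry the same label, hence the same traced atom; but the index at the earlier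
one is strictly smaller, contradicting its uniqueness in an index sequent.
-/

lemma sIter_s (n : ℕ) (t : Tm) : sIter n (Tm.s t) = Tm.s (sIter n t) := by
  induction n with
  | zero => rfl
  | succ n ih => rw [sIter, ih, sIter]

lemma sIter_sIter (n m : ℕ) (t : Tm) : sIter n (sIter m t) = sIter (n + m) t := by
  induction n with
  | zero => rw [Nat.zero_add]; rfl
  | succ n ih => rw [Nat.succ_add, sIter, ih, sIter]

lemma Tm.subst_sIter (θ : ℕ → Tm) (n : ℕ) (t : Tm) :
    (sIter n t).subst θ = sIter n (t.subst θ) := by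
  induction n with
  | zero => rfl
  | succ n ih => simp only [sIter, Tm.subst, ih]

lemma Tm.fv_sIter (n : ℕ) (t : Tm) : (sIter n t).fv = t.fv := by
  induction n with
  | zero => rfl
  | succ n ih => simp only [sIter, Tm.fv, ih]

lemma Tm.subst_eq_self {θ : ℕ → Tm} {t : Tm} (h : ∀ i ∈ t.fv, θ i = Tm.var i) :
    t.subst θ = t := by
  induction t with
  | var i => exact h i rfl
  | zero => rfl
  | s t ih => exact congrArg Tm.s (ih h)

lemma sIter_var_injective {n m i j : ℕ} (h : sIter n (Tm.var i) = sIter m (Tm.var j)) :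
    n = m ∧ i = j := by
  induction n generalizing m with
  | zero => cases m <;> simp_all [sIter]
  | succ n ih =>
    cases m with
    | zero => simp [sIter] at h
    | succ m =>
      simp only [sIter, Tm.s.injEq] at h
      exact ⟨congrArg (· + 1) (ih h).1, (ih h).2⟩

lemma sIter_var_ne_sIter_zero (n m i : ℕ) : sIter n (Tm.var i) ≠ sIter m Tm.zero := by
  induction n generalizing m with
  | zero => cases m <;> simp [sIter]
  | succ n ih => cases m <;> simp [sIter, ih]

namespace EqvTm

variable {A B : Set Fm}

lemma le_of_congruence {R : Tm → Tm → Prop}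
    (hbase : ∀ p q, Fm.eq p q ∈ A → R p q) (hrefl : ∀ t, R t t)
    (hsymm : ∀ {t u}, R t u → R u t) (htrans : ∀ {t u v}, R t u → R u v → R t v)
    (hs : ∀ {t u}, R t u → R (Tm.s t) (Tm.s u)) {t u : Tm} (h : EqvTm A t u) : R t u := by
  induction h with
  | base h => exact hbase _ _ h
  | refl t => exact hrefl t
  | symm _ ih => exact hsymm ih
  | trans _ _ ih1 ih2 => exact htrans ih1 ih2
  | sCongr _ ih => exact hs ih

lemma lift (h : ∀ p q, Fm.eq p q ∈ A → EqvTm B p q) {t u : Tm} :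
    EqvTm A t u → EqvTm B t u :=
  le_of_congruence h refl symm trans sCongr

lemma mono (h : A ⊆ B) {t u : Tm} : EqvTm A t u → EqvTm B t u :=
  lift fun _ _ hp => base (h hp)

lemma subst {θ : ℕ → Tm} (h : ∀ p q, Fm.eq p q ∈ A → EqvTm B (p.subst θ) (q.subst θ))
    {t u : Tm} : EqvTm A t u → EqvTm B (t.subst θ) (u.subst θ) :=
  le_of_congruence (R := fun t u => EqvTm B (t.subst θ) (u.subst θ)) h (fun _ => refl _)
    symm trans sCongr

lemma sIter {t u : Tm} (h : EqvTm A t u) (n : ℕ) : EqvTm A (sIter n t) (sIter n u) := by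
  induction n with
  | zero => exact h
  | succ n ih => exact ih.sCongr

lemma eq_of_forall_eq_notMem (h : ∀ p q, Fm.eq p q ∉ A) {t u : Tm} (he : EqvTm A t u) :
    t = u :=
  le_of_congruence (R := Eq) (fun p q hp => absurd hp (h p q)) (fun _ => rfl)
    Eq.symm Eq.trans (congrArg Tm.s) he

end EqvTm

namespace DepTm

variable {A : Set Fm} {t u v : Tm}

lemma refl (t : Tm) : DepTm A t t := ⟨0, 0, .refl t⟩

lemma of_eqvTm (h : EqvTm A t u) : DepTm A t u := ⟨0, 0, h⟩

lemma symm : DepTm A t u → DepTm A u t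
  | ⟨n, m, h⟩ => ⟨m, n, h.symm⟩

lemma trans : DepTm A t u → DepTm A u v → DepTm A t v
  | ⟨n, m, h1⟩, ⟨n', m', h2⟩ => by
    refine ⟨n' + n, m + m', ?_⟩
    have h1' := h1.sIter n'
    have h2' := h2.sIter m
    rw [sIter_sIter, sIter_sIter] at h1' h2'
    rw [Nat.add_comm m n'] at h2'
    exact h1'.trans h2'

lemma s_right_iff : DepTm A t (Tm.s u) ↔ DepTm A t u :=
  ⟨fun ⟨n, m, h⟩ => ⟨n, m + 1, by rwa [sIter_s] at h⟩,
   fun ⟨n, m, h⟩ => ⟨n + 1, m, by rw [sIter_s]; exact h.sCongr⟩⟩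

lemma s_left_iff : DepTm A (Tm.s t) u ↔ DepTm A t u :=
  ⟨fun h => (s_right_iff.mp h.symm).symm, fun h => (s_right_iff.mpr h.symm).symm⟩

lemma sIter_left_iff (n : ℕ) : DepTm A (sIter n t) u ↔ DepTm A t u := by
  induction n with
  | zero => rfl
  | succ n ih => rw [sIter, s_left_iff, ih]

end DepTm

@[simp] lemma antSet_mk (Γ Δ : Finset Fm) : antSet ⟨Γ, Δ⟩ = (↑Γ : Set Fm) := rfl

@[simp] lemma Tm.subst_var (t : Tm) : t.subst Tm.var = t :=
  Tm.subst_eq_self fun _ _ => rfl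

lemma Fm.exists_of_subst_eq_eq {θ : ℕ → Tm} {ψ : Fm} {a b : Tm}
    (h : ψ.subst θ = .eq a b) : ∃ A B, ψ = .eq A B ∧ a = A.subst θ ∧ b = B.subst θ := by
  cases ψ <;> simp only [Fm.subst, reduceCtorEq, Fm.eq.injEq] at h
  exact ⟨_, _, rfl, h.1.symm, h.2.symm⟩

lemma Fm.exists_of_subst_eq_add1 {θ : ℕ → Tm} {ψ : Fm} {a b c : Tm}
    (h : ψ.subst θ = .add1 a b c) :
    ∃ A B C, ψ = .add1 A B C ∧ a = A.subst θ ∧ b = B.subst θ ∧ c = C.subst θ := by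
  cases ψ <;> simp only [Fm.subst, reduceCtorEq, Fm.add1.injEq] at h
  exact ⟨_, _, _, rfl, h.1.symm, h.2.1.symm, h.2.2.symm⟩

lemma Fm.exists_of_subst_eq_add2 {θ : ℕ → Tm} {ψ : Fm} {a b c : Tm}
    (h : ψ.subst θ = .add2 a b c) :
    ∃ A B C, ψ = .add2 A B C ∧ a = A.subst θ ∧ b = B.subst θ ∧ c = C.subst θ := by
  cases ψ <;> simp only [Fm.subst, reduceCtorEq, Fm.add2.injEq] at h
  exact ⟨_, _, _, rfl, h.1.symm, h.2.1.symm, h.2.2.symm⟩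

def Fm.IsEqOrAdd2 (φ : Fm) : Prop := (∃ t u, φ = Fm.eq t u) ∨ ∃ a b c, φ = Fm.add2 a b c

def Fm.IsAdd1 (φ : Fm) : Prop := ∃ a b c, φ = Fm.add1 a b c

lemma Fm.isEqOrAdd2_subst_iff {θ : ℕ → Tm} {φ : Fm} :
    (φ.subst θ).IsEqOrAdd2 ↔ φ.IsEqOrAdd2 := by
  cases φ <;> simp [Fm.IsEqOrAdd2, Fm.subst]

lemma Fm.isAdd1_subst_iff {θ : ℕ → Tm} {φ : Fm} : (φ.subst θ).IsAdd1 ↔ φ.IsAdd1 := by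
  cases φ <;> simp [Fm.IsAdd1, Fm.subst]

def WellShaped (S : Seq) : Prop := (∀ φ ∈ S.ant, φ.IsEqOrAdd2) ∧ ∀ φ ∈ S.suc, φ.IsAdd1

lemma wellShaped_image_iff {Γ Δ : Finset Fm} {θ : ℕ → Tm} :
    WellShaped ⟨Γ.image (Fm.subst θ), Δ.image (Fm.subst θ)⟩ ↔ WellShaped ⟨Γ, Δ⟩ := by
  simp [WellShaped, Fm.isEqOrAdd2_subst_iff, Fm.isAdd1_subst_iff]

def Separated (S : Seq) : Prop := ∀ t ∈ Aset S, ∀ u ∈ BCset S, ¬ DepTm (antSet S) t u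

structure GoalInvariant (S : Seq) : Prop where
  wellShaped : WellShaped S
  separated : Separated S

section Membership

variable {S : Seq} {a b c : Tm}

lemma mem_Aset_of_add2 (h : Fm.add2 a b c ∈ S.ant) : a ∈ Aset S := Or.inl ⟨b, c, h⟩

lemma mem_Aset_of_add1 (h : Fm.add1 a b c ∈ S.suc) : a ∈ Aset S := Or.inr (Or.inl ⟨b, c, h⟩)

lemma zero_mem_Aset (S : Seq) : Tm.zero ∈ Aset S := Or.inr (Or.inr rfl)

lemma snd_mem_BCset_of_add2 (h : Fm.add2 a b c ∈ S.ant) : b ∈ BCset S := Or.inl ⟨a, c, h⟩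

lemma thd_mem_BCset_of_add2 (h : Fm.add2 a b c ∈ S.ant) : c ∈ BCset S :=
  Or.inr (Or.inl ⟨a, b, h⟩)

lemma snd_mem_BCset_of_add1 (h : Fm.add1 a b c ∈ S.suc) : b ∈ BCset S :=
  Or.inr (Or.inr (Or.inl ⟨a, c, h⟩))

lemma thd_mem_BCset_of_add1 (h : Fm.add1 a b c ∈ S.suc) : c ∈ BCset S :=
  Or.inr (Or.inr (Or.inr ⟨a, b, h⟩))

lemma mem_B1_of_add1 (h : Fm.add1 a b c ∈ S.suc) : b ∈ B1 S := ⟨a, c, h⟩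

lemma mem_Cset_of_add2 (h : Fm.add2 a b c ∈ S.ant) : c ∈ Cset S := Or.inl ⟨a, b, h⟩

lemma mem_Cset_of_add1 (h : Fm.add1 a b c ∈ S.suc) : c ∈ Cset S := Or.inr ⟨a, b, h⟩

end Membership

/-- The index of an `Add2` atom with second argument `b` takes the value `ι`; as a relation,
since different witnesses may give different values outside index sequents. -/
def HasIndex (S : Seq) (b : Tm) (ι : ℤ) : Prop :=
  ∃ a' b' c', Fm.add1 a' b' c' ∈ S.suc ∧ ∃ n m : ℕ,
    EqvTm (antSet S) (sIter n b) (sIter m b') ∧ ι = (m : ℤ) - (n : ℤ)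

lemma HasIndex.unique {S : Seq} {b : Tm} {ι ι' : ℤ} (hS : IndexSequent S)
    (h : HasIndex S b ι) (h' : HasIndex S b ι') : ι = ι' := by
  obtain ⟨_, b₁, _, hm₁, n, m, he₁, rfl⟩ := h
  obtain ⟨_, b₂, _, hm₂, n', m', he₂, rfl⟩ := h'
  have k₁ := he₁.sIter n'
  have k₂ := he₂.sIter n
  rw [sIter_sIter, sIter_sIter, Nat.add_comm n' n] at k₁
  rw [sIter_sIter, sIter_sIter] at k₂
  have := hS.2 b₁ (mem_B1_of_add1 hm₁) b₂ (mem_B1_of_add1 hm₂) _ _ (k₁.symm.trans k₂)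
  omega

lemma HasIndex.congr {S : Seq} {b b' : Tm} {ι : ℤ} (hb : EqvTm (antSet S) b b')
    (h : HasIndex S b' ι) : HasIndex S b ι := by
  obtain ⟨a', b₁, c', hm, n, m, he, rfl⟩ := h
  exact ⟨a', b₁, c', hm, n, m, (hb.sIter n).trans he, rfl⟩

lemma HasIndex.of_s {S : Seq} {b : Tm} {ι : ℤ} (h : HasIndex S (.s b) ι) :
    HasIndex S b (ι - 1) := by
  obtain ⟨a', b', c', hm, n, m, he, rfl⟩ := h
  rw [sIter_s] at he
  exact ⟨a', b', c', hm, n + 1, m, he, by push_cast; ring⟩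

/-- Along `θ`, the premise `S'` maps into the conclusion `S` closely enough to transport
separation, index sequents and indices; the second argument of `Add1` carries the index, so it
must be matched up to `≡_S`, not just `~_S`. -/
structure Embeds (θ : ℕ → Tm) (S' S : Seq) : Prop where
  eqv : ∀ {v w}, EqvTm (antSet S') v w → EqvTm (antSet S) (v.subst θ) (w.subst θ)
  add2 : ∀ {a b c}, Fm.add2 a b c ∈ S'.ant → ∃ a₀ b₀ c₀, Fm.add2 a₀ b₀ c₀ ∈ S.ant ∧
    DepTm (antSet S) (a.subst θ) a₀ ∧ DepTm (antSet S) (b.subst θ) b₀ ∧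
    DepTm (antSet S) (c.subst θ) c₀
  add1 : ∀ {a b c}, Fm.add1 a b c ∈ S'.suc → ∃ a₀ b₀ c₀, Fm.add1 a₀ b₀ c₀ ∈ S.suc ∧
    DepTm (antSet S) (a.subst θ) a₀ ∧ EqvTm (antSet S) (b.subst θ) b₀ ∧
    DepTm (antSet S) (c.subst θ) c₀

namespace Embeds

variable {θ : ℕ → Tm} {S' S : Seq}

lemma depTm (he : Embeds θ S' S) {t u : Tm} :
    DepTm (antSet S') t u → DepTm (antSet S) (t.subst θ) (u.subst θ)
  | ⟨n, m, h⟩ => ⟨n, m, by simpa only [Tm.subst_sIter] using he.eqv h⟩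

lemma Aset (he : Embeds θ S' S) {t : Tm} (ht : t ∈ Aset S') :
    ∃ t₀ ∈ Aset S, DepTm (antSet S) (t.subst θ) t₀ := by
  rcases ht with ⟨b, c, hm⟩ | ⟨b, c, hm⟩ | rfl
  · obtain ⟨a₀, _, _, hm₀, ha, -⟩ := he.add2 hm
    exact ⟨a₀, mem_Aset_of_add2 hm₀, ha⟩
  · obtain ⟨a₀, _, _, hm₀, ha, -⟩ := he.add1 hm
    exact ⟨a₀, mem_Aset_of_add1 hm₀, ha⟩
  · exact ⟨Tm.zero, zero_mem_Aset S, DepTm.refl _⟩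

lemma BCset (he : Embeds θ S' S) {u : Tm} (hu : u ∈ BCset S') :
    ∃ u₀ ∈ BCset S, DepTm (antSet S) (u.subst θ) u₀ := by
  rcases hu with ⟨a, c, hm⟩ | ⟨a, b, hm⟩ | ⟨a, c, hm⟩ | ⟨a, b, hm⟩
  · obtain ⟨_, b₀, _, hm₀, -, hb, -⟩ := he.add2 hm
    exact ⟨b₀, snd_mem_BCset_of_add2 hm₀, hb⟩
  · obtain ⟨_, _, c₀, hm₀, -, -, hc⟩ := he.add2 hm
    exact ⟨c₀, thd_mem_BCset_of_add2 hm₀, hc⟩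
  · obtain ⟨_, b₀, _, hm₀, -, hb, -⟩ := he.add1 hm
    exact ⟨b₀, snd_mem_BCset_of_add1 hm₀, DepTm.of_eqvTm hb⟩
  · obtain ⟨_, _, c₀, hm₀, -, -, hc⟩ := he.add1 hm
    exact ⟨c₀, thd_mem_BCset_of_add1 hm₀, hc⟩

lemma Cset (he : Embeds θ S' S) {u : Tm} (hu : u ∈ Cset S') :
    ∃ u₀ ∈ Cset S, DepTm (antSet S) (u.subst θ) u₀ := by
  rcases hu with ⟨a, b, hm⟩ | ⟨a, b, hm⟩
  · obtain ⟨_, _, c₀, hm₀, -, -, hc⟩ := he.add2 hm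
    exact ⟨c₀, mem_Cset_of_add2 hm₀, hc⟩
  · obtain ⟨_, _, c₀, hm₀, -, -, hc⟩ := he.add1 hm
    exact ⟨c₀, mem_Cset_of_add1 hm₀, hc⟩

lemma separated (he : Embeds θ S' S) (h : Separated S) : Separated S' := by
  intro t ht u hu hd
  obtain ⟨t₀, ht₀, htt₀⟩ := he.Aset ht
  obtain ⟨u₀, hu₀, huu₀⟩ := he.BCset hu
  exact h t₀ ht₀ u₀ hu₀ (htt₀.symm.trans ((he.depTm hd).trans huu₀))

lemma indexSequent (he : Embeds θ S' S) (h : IndexSequent S) : IndexSequent S' := by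
  constructor
  · rintro t ⟨a, c, hm⟩ u hu hd
    obtain ⟨_, t₀, _, hm₀, -, htt₀, -⟩ := he.add1 hm
    obtain ⟨u₀, hu₀, huu₀⟩ := he.Cset hu
    exact h.1 t₀ (mem_B1_of_add1 hm₀) u₀ hu₀
      ((DepTm.of_eqvTm htt₀).symm.trans ((he.depTm hd).trans huu₀))
  · rintro b ⟨a, c, hm⟩ b' ⟨a', c', hm'⟩ n m hbb'
    obtain ⟨_, b₀, _, hm₀, -, hb, -⟩ := he.add1 hm
    obtain ⟨_, b₀', _, hm₀', -, hb', -⟩ := he.add1 hm'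
    have hbb'θ := he.eqv hbb'
    rw [Tm.subst_sIter, Tm.subst_sIter] at hbb'θ
    exact h.2 b₀ (mem_B1_of_add1 hm₀) b₀' (mem_B1_of_add1 hm₀') n m
      (((hb.sIter n).symm.trans hbb'θ).trans (hb'.sIter m))

lemma hasIndex (he : Embeds θ S' S) {b : Tm} {ι : ℤ} (h : HasIndex S' b ι) :
    HasIndex S (b.subst θ) ι := by
  obtain ⟨a', b', c', hm, n, m, hbb', rfl⟩ := h
  obtain ⟨a₀, b₀, c₀, hm₀, -, hb', -⟩ := he.add1 hm
  have hbb'θ := he.eqv hbb'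
  rw [Tm.subst_sIter, Tm.subst_sIter] at hbb'θ
  exact ⟨a₀, b₀, c₀, hm₀, n, m, hbb'θ.trans (hb'.sIter m), rfl⟩

end Embeds

section Rules

variable {Γ Δ : Finset Fm} {θ : ℕ → Tm}

lemma eq_mem_image_iff {a b : Tm} : Fm.eq a b ∈ Γ.image (Fm.subst θ) ↔
    ∃ A B, Fm.eq A B ∈ Γ ∧ a = A.subst θ ∧ b = B.subst θ := by
  constructor
  · intro hm
    obtain ⟨ψ, hψ, he⟩ := Finset.mem_image.mp hm
    obtain ⟨A, B, rfl, ha, hb⟩ := Fm.exists_of_subst_eq_eq he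
    exact ⟨A, B, hψ, ha, hb⟩
  · rintro ⟨A, B, hm, rfl, rfl⟩
    exact Finset.mem_image_of_mem (Fm.subst θ) hm

lemma add1_mem_image_iff {a b c : Tm} : Fm.add1 a b c ∈ Γ.image (Fm.subst θ) ↔
    ∃ A B C, Fm.add1 A B C ∈ Γ ∧ a = A.subst θ ∧ b = B.subst θ ∧ c = C.subst θ := by
  constructor
  · intro hm
    obtain ⟨ψ, hψ, he⟩ := Finset.mem_image.mp hm
    obtain ⟨A, B, C, rfl, ha, hb, hc⟩ := Fm.exists_of_subst_eq_add1 he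
    exact ⟨A, B, C, hψ, ha, hb, hc⟩
  · rintro ⟨A, B, C, hm, rfl, rfl, rfl⟩
    exact Finset.mem_image_of_mem (Fm.subst θ) hm

lemma add2_mem_image_iff {a b c : Tm} : Fm.add2 a b c ∈ Γ.image (Fm.subst θ) ↔
    ∃ A B C, Fm.add2 A B C ∈ Γ ∧ a = A.subst θ ∧ b = B.subst θ ∧ c = C.subst θ := by
  constructor
  · intro hm
    obtain ⟨ψ, hψ, he⟩ := Finset.mem_image.mp hm
    obtain ⟨A, B, C, rfl, ha, hb, hc⟩ := Fm.exists_of_subst_eq_add2 he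
    exact ⟨A, B, C, hψ, ha, hb, hc⟩
  · rintro ⟨A, B, C, hm, rfl, rfl, rfl⟩
    exact Finset.mem_image_of_mem (Fm.subst θ) hm

lemma embeds_weak {Γ' Δ' : Finset Fm} (hΓ : Γ' ⊆ Γ) (hΔ : Δ' ⊆ Δ) :
    Embeds Tm.var ⟨Γ', Δ'⟩ ⟨Γ, Δ⟩ where
  eqv h := by simpa only [Tm.subst_var] using EqvTm.mono (by simpa using hΓ) h
  add2 {a b c} hm := ⟨a, b, c, hΓ hm, by simp only [Tm.subst_var, DepTm.refl, and_self]⟩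
  add1 {a b c} hm := ⟨a, b, c, hΔ hm, by simp only [Tm.subst_var, DepTm.refl, EqvTm.refl,
    and_self]⟩

lemma embeds_subst : Embeds θ ⟨Γ, Δ⟩ ⟨Γ.image (Fm.subst θ), Δ.image (Fm.subst θ)⟩ where
  eqv := EqvTm.subst fun p q hpq =>
    .base (by simpa using eq_mem_image_iff.mpr ⟨p, q, hpq, rfl, rfl⟩)
  add2 {a b c} hm := ⟨_, _, _, add2_mem_image_iff.mpr ⟨a, b, c, hm, rfl, rfl, rfl⟩,
    DepTm.refl _, DepTm.refl _, DepTm.refl _⟩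
  add1 {a b c} hm := ⟨_, _, _, add1_mem_image_iff.mpr ⟨a, b, c, hm, rfl, rfl, rfl⟩,
    DepTm.refl _, EqvTm.refl _, DepTm.refl _⟩

lemma embeds_add1R2 {a b c : Tm} :
    Embeds Tm.var ⟨Γ, insert (.add1 a b c) Δ⟩ ⟨Γ, insert (.add1 (.s a) b (.s c)) Δ⟩ where
  eqv h := by simpa only [Tm.subst_var, antSet_mk] using h
  add2 {a' b' c'} hm := ⟨a', b', c', hm, by simp only [Tm.subst_var, DepTm.refl, and_self]⟩
  add1 {a' b' c'} hm := by
    simp only [Tm.subst_var]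
    rcases Finset.mem_insert.mp hm with he | hm
    · obtain ⟨rfl, rfl, rfl⟩ := Fm.add1.inj he
      exact ⟨_, _, _, Finset.mem_insert_self _ _, DepTm.s_right_iff.mpr (DepTm.refl _),
        EqvTm.refl _, DepTm.s_right_iff.mpr (DepTm.refl _)⟩
    · exact ⟨a', b', c', Finset.mem_insert_of_mem hm, DepTm.refl _, EqvTm.refl _,
        DepTm.refl _⟩

section EqLa

variable {v1 v2 : ℕ} {t u : Tm}

lemma EqvTm.subst_swap {A : Set Fm} (h : Fm.eq t u ∈ A) (w : Tm) :
    EqvTm A (w.subst (sub2 v1 v2 u t)) (w.subst (sub2 v1 v2 t u)) := by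
  induction w with
  | var i =>
    simp only [Tm.subst, sub2]
    split_ifs
    · exact (EqvTm.base h).symm
    · exact EqvTm.base h
    · exact .refl _
  | zero => exact .refl _
  | s w ih => exact ih.sCongr

lemma embeds_eqLa : Embeds Tm.var
    ⟨insert (.eq t u) (Γ.image (Fm.subst (sub2 v1 v2 u t))),
      Δ.image (Fm.subst (sub2 v1 v2 u t))⟩
    ⟨insert (.eq t u) (Γ.image (Fm.subst (sub2 v1 v2 t u))),
      Δ.image (Fm.subst (sub2 v1 v2 t u))⟩ := by
  have htu : Fm.eq t u ∈ (↑(insert (Fm.eq t u) (Γ.image (Fm.subst (sub2 v1 v2 t u)))) : Set Fm) :=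
    Finset.mem_insert_self _ _
  have swap := EqvTm.subst_swap (v1 := v1) (v2 := v2) htu
  refine ⟨fun h => ?_, fun {a b c} hm => ?_, fun {a b c} hm => ?_⟩
  · simp only [Tm.subst_var, antSet_mk] at h ⊢
    refine EqvTm.lift (fun p q hpq => ?_) h
    rcases Finset.mem_insert.mp hpq with he | hpq
    · obtain ⟨rfl, rfl⟩ := Fm.eq.inj he
      exact .base htu
    · obtain ⟨P, Q, hPQ, rfl, rfl⟩ := eq_mem_image_iff.mp hpq
      have hmid : Fm.eq (P.subst (sub2 v1 v2 t u)) (Q.subst (sub2 v1 v2 t u)) ∈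
          insert (Fm.eq t u) (Γ.image (Fm.subst (sub2 v1 v2 t u))) :=
        Finset.mem_insert_of_mem (eq_mem_image_iff.mpr ⟨P, Q, hPQ, rfl, rfl⟩)
      exact ((swap P).trans (.base hmid)).trans (swap Q).symm
  · simp only [Tm.subst_var]
    rcases Finset.mem_insert.mp hm with he | hm
    · exact absurd he (by simp)
    obtain ⟨A, B, C, hABC, rfl, rfl, rfl⟩ := add2_mem_image_iff.mp hm
    exact ⟨_, _, _,
      Finset.mem_insert_of_mem (add2_mem_image_iff.mpr ⟨A, B, C, hABC, rfl, rfl, rfl⟩),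
      .of_eqvTm (swap A), .of_eqvTm (swap B), .of_eqvTm (swap C)⟩
  · simp only [Tm.subst_var]
    obtain ⟨A, B, C, hABC, rfl, rfl, rfl⟩ := add1_mem_image_iff.mp hm
    exact ⟨_, _, _, add1_mem_image_iff.mpr ⟨A, B, C, hABC, rfl, rfl, rfl⟩,
      .of_eqvTm (swap A), swap B, .of_eqvTm (swap C)⟩

end EqLa

end Rules

/-- Reads a term of the right premise of (Case Add2) back in its conclusion: `s^(n+1) x`
becomes `s^n a` (from the equation `a = s x`), the bare `x` has no counterpart, and the
other variables are substituted by `θ`. -/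
def readBack (x : ℕ) (a : Tm) (θ : ℕ → Tm) : Tm → Option Tm
  | .var i => if i = x then none else some (θ i)
  | .zero => some .zero
  | .s w => some ((readBack x a θ w).elim a Tm.s)

section ReadBack

variable {x : ℕ} {a : Tm} {θ : ℕ → Tm}

lemma readBack_of_notMem {w : Tm} (h : x ∉ w.fv) : readBack x a θ w = some (w.subst θ) := by
  induction w with
  | var i => simp_all [readBack, Tm.fv, Tm.subst, eq_comm]
  | zero => rfl
  | s w ih => simp_all [readBack, Tm.fv, Tm.subst]

lemma readBack_eq_none_iff {w : Tm} : readBack x a θ w = none ↔ w = .var x := by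
  cases w <;> simp [readBack]

lemma readBack_sIter {w p : Tm} (h : readBack x a θ w = some p) (n : ℕ) :
    readBack x a θ (sIter n w) = some (sIter n p) := by
  induction n with
  | zero => exact h
  | succ n ih => simp [sIter, readBack, ih]

lemma readBack_sIter_succ_var (n : ℕ) :
    readBack x a θ (sIter (n + 1) (.var x)) = some (sIter n a) := by
  rw [sIter, ← sIter_s]
  exact readBack_sIter (by simp [readBack]) n

lemma readBack_rel_of_eqvTm {A' A : Set Fm}
    (hbase : ∀ p q, Fm.eq p q ∈ A' → Option.Rel (EqvTm A) (readBack x a θ p) (readBack x a θ q))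
    {w w' : Tm} (h : EqvTm A' w w') :
    Option.Rel (EqvTm A) (readBack x a θ w) (readBack x a θ w') := by
  refine EqvTm.le_of_congruence hbase (fun t => ?_) (fun {t u} h => ?_)
    (fun {t u v} h1 h2 => ?_) (fun {t u} h => ?_) h
  · cases readBack x a θ t
    exacts [.none, .some (.refl _)]
  · generalize readBack x a θ t = o, readBack x a θ u = o' at h
    cases h
    exacts [.some (EqvTm.symm ‹_›), .none]
  · generalize readBack x a θ t = o, readBack x a θ u = o', readBack x a θ v = o'' at h1 h2
    cases h1 <;> cases h2
    exacts [.some (EqvTm.trans ‹_› ‹_›), .none]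
  · simp only [readBack]
    generalize readBack x a θ t = o, readBack x a θ u = o' at h
    cases h
    exacts [.some (EqvTm.sCongr ‹_›), .some (.refl _)]

end ReadBack

abbrev caseLeftPrem (Γ Δ : Finset Fm) (a b c : Tm) (y : ℕ) : Seq :=
  ⟨insert (.eq a .zero) (insert (.eq b (.var y)) (insert (.eq c (.var y)) Γ)), Δ⟩

abbrev caseRightPrem (Γ Δ : Finset Fm) (a b c : Tm) (x y z : ℕ) : Seq :=
  ⟨insert (.eq a (.s (.var x))) (insert (.eq b (.var y)) (insert (.eq c (.var z))
    (insert (.add2 (.var x) (.s (.var y)) (.var z)) Γ))), Δ⟩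

structure CaseAdd2Fresh (Γ Δ : Finset Fm) (a b c : Tm) (x y z : ℕ) : Prop where
  xy : x ≠ y
  xz : x ≠ z
  yz : y ≠ z
  fresh : ∀ ψ ∈ insert (Fm.add2 a b c) (Γ ∪ Δ), x ∉ ψ.fv ∧ y ∉ ψ.fv ∧ z ∉ ψ.fv

lemma CaseAdd2Fresh.y_fresh {Γ Δ : Finset Fm} {a b c : Tm} {x y z : ℕ}
    (hf : CaseAdd2Fresh Γ Δ a b c x y z) : ∀ ψ ∈ insert (Fm.add2 a b c) (Γ ∪ Δ), y ∉ ψ.fv :=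
  fun ψ hψ => (hf.fresh ψ hψ).2.1

section CaseRight

variable {Γ Δ : Finset Fm} {a b c : Tm} {x y z : ℕ}

local notation "ρ" => readBack x a (sub2 y z b c)

lemma readBack_eq_self {w : Tm} {ψ : Fm} (hψ : x ∉ ψ.fv ∧ y ∉ ψ.fv ∧ z ∉ ψ.fv)
    (hw : w.fv ⊆ ψ.fv) : ρ w = some w := by
  rw [readBack_of_notMem fun h => hψ.1 (hw h), Tm.subst_eq_self]
  intro i hi
  have hy : i ≠ y := fun e => hψ.2.1 (hw (e ▸ hi))
  have hz : i ≠ z := fun e => hψ.2.2 (hw (e ▸ hi))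
  simp [sub2, hy, hz]

lemma readBack_sIter_getD (n : ℕ) (t : Tm) :
    ((ρ t).getD a = a ∧ ρ (sIter n t) = none) ∨
      ∃ k, ρ (sIter n t) = some (sIter k ((ρ t).getD a)) := by
  cases ht : ρ t with
  | some p => exact Or.inr ⟨n, readBack_sIter ht n⟩
  | none =>
    obtain rfl := readBack_eq_none_iff.mp ht
    cases n with
    | zero => exact Or.inl ⟨rfl, ht⟩
    | succ k => exact Or.inr ⟨k, readBack_sIter_succ_var k⟩

variable (hf : CaseAdd2Fresh Γ Δ a b c x y z)
include hf

lemma caseRight_readBack_rel {w w' : Tm}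
    (h : EqvTm (antSet (caseRightPrem Γ Δ a b c x y z)) w w') :
    Option.Rel (EqvTm (antSet ⟨insert (.add2 a b c) Γ, Δ⟩)) (ρ w) (ρ w') := by
  have hP := hf.fresh _ (Finset.mem_insert_self _ _)
  refine readBack_rel_of_eqvTm (fun p q hpq => ?_) h
  simp only [antSet_mk, Finset.coe_insert, Set.mem_insert_iff, Fm.eq.injEq, reduceCtorEq,
    Finset.mem_coe, false_or] at hpq
  have rel {o o' : Option Tm} {p : Tm} (h : o = some p) (h' : o' = some p) :
      Option.Rel (EqvTm (antSet ⟨insert (.add2 a b c) Γ, Δ⟩)) o o' := by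
    rw [h, h']; exact .some (EqvTm.refl p)
  rcases hpq with ⟨rfl, rfl⟩ | ⟨rfl, rfl⟩ | ⟨rfl, rfl⟩ | hΓ
  · exact rel (readBack_eq_self hP (by intro; simp_all [Fm.fv])) (by simp [readBack])
  · exact rel (readBack_eq_self hP (by intro; simp_all [Fm.fv]))
      (by simp [readBack, sub2, hf.xy.symm])
  · exact rel (readBack_eq_self hP (by intro; simp_all [Fm.fv]))
      (by simp [readBack, sub2, hf.xz.symm, hf.yz.symm])
  · have hψ := hf.fresh (Fm.eq p q) (by simp [hΓ])
    rw [readBack_eq_self hψ (by intro; simp_all [Fm.fv]),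
      readBack_eq_self hψ (by intro; simp_all [Fm.fv])]
    exact .some (.base (by simp [hΓ]))

/-- Reading the bare `x` as `a` respects `~`: `x` is `≡`-related only to itself, and
`s^(k+1) x` reads back as `s^k a`. -/
lemma caseRight_depTm {t u : Tm} (h : DepTm (antSet (caseRightPrem Γ Δ a b c x y z)) t u) :
    DepTm (antSet ⟨insert (.add2 a b c) Γ, Δ⟩) ((ρ t).getD a) ((ρ u).getD a) := by
  obtain ⟨n, m, he⟩ := h
  have hr := caseRight_readBack_rel hf he
  rcases readBack_sIter_getD n t with ⟨ht, ht'⟩ | ⟨k, ht⟩ <;>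
    rcases readBack_sIter_getD m u with ⟨hu, hu'⟩ | ⟨l, hu⟩
  · rw [ht, hu]
    exact DepTm.refl a
  all_goals first
    | (rw [ht', hu] at hr; cases hr)
    | (rw [ht, hu'] at hr; cases hr)
    | (rw [ht, hu] at hr; cases hr with | some hr => exact ⟨k, l, hr⟩)

lemma caseRight_eqvTm {w w' p q : Tm}
    (h : EqvTm (antSet (caseRightPrem Γ Δ a b c x y z)) w w')
    (hw : ρ w = some p) (hw' : ρ w' = some q) :
    EqvTm (antSet ⟨insert (.add2 a b c) Γ, Δ⟩) p q := by
  have hr := caseRight_readBack_rel hf h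
  rw [hw, hw'] at hr
  cases hr with | some hr => exact hr

lemma readBack_add2_args {A B C : Tm} (hm : Fm.add2 A B C ∈ insert (Fm.add2 a b c) Γ) :
    ρ A = some A ∧ ρ B = some B ∧ ρ C = some C := by
  have hψ := hf.fresh _ (Finset.insert_subset_insert _ Finset.subset_union_left hm)
  exact ⟨readBack_eq_self hψ (by intro; simp_all [Fm.fv]),
    readBack_eq_self hψ (by intro; simp_all [Fm.fv]),
    readBack_eq_self hψ (by intro; simp_all [Fm.fv])⟩

lemma readBack_add1_args {A B C : Tm} (hm : Fm.add1 A B C ∈ Δ) :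
    ρ A = some A ∧ ρ B = some B ∧ ρ C = some C := by
  have hψ := hf.fresh _ (Finset.mem_insert_of_mem (Finset.mem_union_right _ hm))
  exact ⟨readBack_eq_self hψ (by intro; simp_all [Fm.fv]),
    readBack_eq_self hψ (by intro; simp_all [Fm.fv]),
    readBack_eq_self hψ (by intro; simp_all [Fm.fv])⟩

lemma caseRight_Aset {t : Tm} (ht : t ∈ Aset (caseRightPrem Γ Δ a b c x y z)) :
    (ρ t).getD a ∈ Aset ⟨insert (.add2 a b c) Γ, Δ⟩ := by
  rcases ht with ⟨B, C, hm⟩ | ⟨B, C, hm⟩ | rfl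
  · simp only [Finset.mem_insert, reduceCtorEq, Fm.add2.injEq, false_or] at hm
    rcases hm with ⟨rfl, -, -⟩ | hm
    · simpa [readBack] using mem_Aset_of_add2 (Finset.mem_insert_self (Fm.add2 a b c) Γ)
    · rw [(readBack_add2_args hf (Finset.mem_insert_of_mem hm)).1]
      exact mem_Aset_of_add2 (S := ⟨_, Δ⟩) (Finset.mem_insert_of_mem hm)
  · rw [(readBack_add1_args hf hm).1]
    exact mem_Aset_of_add1 (S := ⟨_, Δ⟩) hm
  · exact zero_mem_Aset _

lemma caseRight_BCset {u : Tm} (hu : u ∈ BCset (caseRightPrem Γ Δ a b c x y z)) :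
    ∃ u₀ ∈ BCset ⟨insert (.add2 a b c) Γ, Δ⟩,
      DepTm (antSet ⟨insert (.add2 a b c) Γ, Δ⟩) ((ρ u).getD a) u₀ := by
  have hprinc := Finset.mem_insert_self (Fm.add2 a b c) Γ
  rcases hu with ⟨A, C, hm⟩ | ⟨A, B, hm⟩ | ⟨A, C, hm⟩ | ⟨A, B, hm⟩
  · simp only [Finset.mem_insert, reduceCtorEq, Fm.add2.injEq, false_or] at hm
    rcases hm with ⟨-, rfl, -⟩ | hm
    · refine ⟨b, snd_mem_BCset_of_add2 (S := ⟨_, Δ⟩) hprinc, ?_⟩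
      simpa [readBack, sub2, hf.xy.symm] using DepTm.s_left_iff.mpr (DepTm.refl b)
    · rw [(readBack_add2_args hf (Finset.mem_insert_of_mem hm)).2.1]
      exact ⟨u, snd_mem_BCset_of_add2 (S := ⟨_, Δ⟩) (Finset.mem_insert_of_mem hm), .refl u⟩
  · simp only [Finset.mem_insert, reduceCtorEq, Fm.add2.injEq, false_or] at hm
    rcases hm with ⟨-, -, rfl⟩ | hm
    · refine ⟨c, thd_mem_BCset_of_add2 (S := ⟨_, Δ⟩) hprinc, ?_⟩
      simpa [readBack, sub2, hf.xz.symm, hf.yz.symm] using DepTm.refl c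
    · rw [(readBack_add2_args hf (Finset.mem_insert_of_mem hm)).2.2]
      exact ⟨u, thd_mem_BCset_of_add2 (S := ⟨_, Δ⟩) (Finset.mem_insert_of_mem hm), .refl u⟩
  · rw [(readBack_add1_args hf hm).2.1]
    exact ⟨u, snd_mem_BCset_of_add1 (S := ⟨_, Δ⟩) hm, .refl u⟩
  · rw [(readBack_add1_args hf hm).2.2]
    exact ⟨u, thd_mem_BCset_of_add1 (S := ⟨_, Δ⟩) hm, .refl u⟩

lemma caseRight_Cset {u : Tm} (hu : u ∈ Cset (caseRightPrem Γ Δ a b c x y z)) :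
    (ρ u).getD a ∈ Cset ⟨insert (.add2 a b c) Γ, Δ⟩ := by
  rcases hu with ⟨A, B, hm⟩ | ⟨A, B, hm⟩
  · simp only [Finset.mem_insert, reduceCtorEq, Fm.add2.injEq, false_or] at hm
    rcases hm with ⟨-, -, rfl⟩ | hm
    · simpa [readBack, sub2, hf.xz.symm, hf.yz.symm] using
        mem_Cset_of_add2 (S := ⟨_, Δ⟩) (Finset.mem_insert_self (Fm.add2 a b c) Γ)
    · rw [(readBack_add2_args hf (Finset.mem_insert_of_mem hm)).2.2]
      exact mem_Cset_of_add2 (S := ⟨_, Δ⟩) (Finset.mem_insert_of_mem hm)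
  · rw [(readBack_add1_args hf hm).2.2]
    exact mem_Cset_of_add1 (S := ⟨_, Δ⟩) hm

lemma separated_caseRight (h : Separated ⟨insert (.add2 a b c) Γ, Δ⟩) :
    Separated (caseRightPrem Γ Δ a b c x y z) := by
  intro t ht u hu hd
  obtain ⟨u₀, hu₀, huu₀⟩ := caseRight_BCset hf hu
  exact h _ (caseRight_Aset hf ht) u₀ hu₀
    ((caseRight_depTm hf hd).trans huu₀)

lemma indexSequent_caseRight (h : IndexSequent ⟨insert (.add2 a b c) Γ, Δ⟩) :
    IndexSequent (caseRightPrem Γ Δ a b c x y z) := by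
  constructor
  · rintro t ⟨A, C, hm⟩ u hu hd
    have hρt := (readBack_add1_args hf hm).2.1
    have := caseRight_depTm hf hd
    rw [hρt, Option.getD_some] at this
    exact h.1 t (mem_B1_of_add1 (S := ⟨_, Δ⟩) hm) _ (caseRight_Cset hf hu) this
  · rintro b₁ ⟨A, C, hm⟩ b₂ ⟨A', C', hm'⟩ n m he
    exact h.2 b₁ (mem_B1_of_add1 (S := ⟨_, Δ⟩) hm) b₂ (mem_B1_of_add1 (S := ⟨_, Δ⟩) hm') n m
      (caseRight_eqvTm hf he
        (readBack_sIter (readBack_add1_args hf hm).2.1 n)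
        (readBack_sIter (readBack_add1_args hf hm').2.1 m))

lemma hasIndex_caseRight {w p : Tm} (hw : ρ w = some p) {ι : ℤ}
    (h : HasIndex (caseRightPrem Γ Δ a b c x y z) w ι) :
    HasIndex ⟨insert (.add2 a b c) Γ, Δ⟩ p ι := by
  obtain ⟨A, B, C, hm, n, m, he, rfl⟩ := h
  exact ⟨A, B, C, hm, n, m, caseRight_eqvTm hf he (readBack_sIter hw n)
    (readBack_sIter (readBack_add1_args hf hm).2.1 m), rfl⟩

end CaseRight

section Merge

variable {A : Set Fm} {a b c : Tm}

def LinkedA0 (A : Set Fm) (a v : Tm) : Prop := DepTm A v a ∨ DepTm A v .zero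

def LinkedBC (A : Set Fm) (b c v : Tm) : Prop := DepTm A v b ∨ DepTm A v c

lemma LinkedA0.of_eqvTm {v w : Tm} (h : EqvTm A v w) : LinkedA0 A a w → LinkedA0 A a v :=
  Or.imp (DepTm.of_eqvTm h).trans (DepTm.of_eqvTm h).trans

lemma LinkedBC.of_eqvTm {v w : Tm} (h : EqvTm A v w) : LinkedBC A b c w → LinkedBC A b c v :=
  Or.imp (DepTm.of_eqvTm h).trans (DepTm.of_eqvTm h).trans

lemma linkedA0_sIter_iff {v : Tm} (n : ℕ) : LinkedA0 A a (sIter n v) ↔ LinkedA0 A a v := by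
  simp only [LinkedA0, DepTm.sIter_left_iff]

lemma linkedBC_sIter_iff {v : Tm} (n : ℕ) : LinkedBC A b c (sIter n v) ↔ LinkedBC A b c v := by
  simp only [LinkedBC, DepTm.sIter_left_iff]

/-- `≡_A` after merging the `~_A`-classes of `a` and `0`, and those of `b` and `c`. -/
def MergedEqv (A : Set Fm) (a b c v w : Tm) : Prop :=
  EqvTm A v w ∨ (LinkedA0 A a v ∧ LinkedA0 A a w) ∨ (LinkedBC A b c v ∧ LinkedBC A b c w)

/-- When no term is linked to both merged classes, the merge is already a congruence. -/
lemma mergedEqv_of_eqvTm (hAB : ∀ v, LinkedA0 A a v → LinkedBC A b c v → False) {v w : Tm}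
    (h : EqvTm (insert (Fm.eq a .zero) (insert (Fm.eq b c) A)) v w) :
    MergedEqv A a b c v w := by
  refine EqvTm.le_of_congruence (fun p q hpq => ?_) (fun t => Or.inl (.refl t))
    (fun h => ?_) (fun h1 h2 => ?_) (fun h => ?_) h
  · rcases hpq with hpq | hpq | hpq
    · obtain ⟨rfl, rfl⟩ := Fm.eq.inj hpq
      exact Or.inr (Or.inl ⟨Or.inl (.refl _), Or.inr (.refl _)⟩)
    · obtain ⟨rfl, rfl⟩ := Fm.eq.inj hpq
      exact Or.inr (Or.inr ⟨Or.inl (.refl _), Or.inr (.refl _)⟩)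
    · exact Or.inl (.base hpq)
  · exact h.imp EqvTm.symm (Or.imp And.symm And.symm)
  · rcases h1 with h1 | ⟨ha, hb⟩ | ⟨ha, hb⟩ <;> rcases h2 with h2 | ⟨hc, hd⟩ | ⟨hc, hd⟩
    · exact Or.inl (h1.trans h2)
    · exact Or.inr (Or.inl ⟨hc.of_eqvTm h1, hd⟩)
    · exact Or.inr (Or.inr ⟨hc.of_eqvTm h1, hd⟩)
    · exact Or.inr (Or.inl ⟨ha, hb.of_eqvTm h2.symm⟩)
    · exact Or.inr (Or.inl ⟨ha, hd⟩)
    · exact (hAB _ hb hc).elim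
    · exact Or.inr (Or.inr ⟨ha, hb.of_eqvTm h2.symm⟩)
    · exact (hAB _ hc hb).elim
    · exact Or.inr (Or.inr ⟨ha, hd⟩)
  · rcases h with h | ⟨h1, h2⟩ | ⟨h1, h2⟩
    · exact Or.inl h.sCongr
    · exact Or.inr (Or.inl ⟨(linkedA0_sIter_iff 1).mpr h1, (linkedA0_sIter_iff 1).mpr h2⟩)
    · exact Or.inr (Or.inr ⟨(linkedBC_sIter_iff 1).mpr h1, (linkedBC_sIter_iff 1).mpr h2⟩)

end Merge

lemma mem_BCset_of_mem_B1 {S : Seq} {b : Tm} : b ∈ B1 S → b ∈ BCset S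
  | ⟨_, _, h⟩ => snd_mem_BCset_of_add1 h

lemma Tm.subst_sub1_eq_self {y : ℕ} {b w : Tm} (h : y ∉ w.fv) : w.subst (sub1 y b) = w :=
  Tm.subst_eq_self fun i hi => if_neg fun (e : i = y) => h (e ▸ hi)

section CaseLeft

variable {Γ Δ : Finset Fm} {a b c : Tm} {y : ℕ}

lemma not_linkedA0_of_mem_BCset (hsep : Separated ⟨insert (.add2 a b c) Γ, Δ⟩) {u : Tm}
    (hu : u ∈ BCset ⟨insert (.add2 a b c) Γ, Δ⟩) :
    ¬ LinkedA0 (antSet ⟨insert (.add2 a b c) Γ, Δ⟩) a u := by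
  rintro (h | h)
  · exact hsep a (mem_Aset_of_add2 (Finset.mem_insert_self _ _)) u hu h.symm
  · exact hsep _ (zero_mem_Aset _) u hu h.symm

lemma not_linkedBC_of_mem_Aset (hsep : Separated ⟨insert (.add2 a b c) Γ, Δ⟩) {t : Tm}
    (ht : t ∈ Aset ⟨insert (.add2 a b c) Γ, Δ⟩) :
    ¬ LinkedBC (antSet ⟨insert (.add2 a b c) Γ, Δ⟩) b c t := by
  rintro (h | h)
  · exact hsep t ht b (snd_mem_BCset_of_add2 (Finset.mem_insert_self _ _)) h
  · exact hsep t ht c (thd_mem_BCset_of_add2 (Finset.mem_insert_self _ _)) h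

lemma not_linkedBC_of_mem_B1 (hIS : IndexSequent ⟨insert (.add2 a b c) Γ, Δ⟩)
    (hbot : IndexBot ⟨insert (.add2 a b c) Γ, Δ⟩ b) {t : Tm}
    (ht : t ∈ B1 ⟨insert (.add2 a b c) Γ, Δ⟩) :
    ¬ LinkedBC (antSet ⟨insert (.add2 a b c) Γ, Δ⟩) b c t := by
  obtain ⟨a', c', hm⟩ := ht
  rintro (h | h)
  · exact hbot a' t c' hm h.symm
  · exact hIS.1 t ⟨a', c', hm⟩ c (mem_Cset_of_add2 (Finset.mem_insert_self _ _)) h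

variable (hy : ∀ ψ ∈ insert (Fm.add2 a b c) (Γ ∪ Δ), y ∉ ψ.fv)
include hy

lemma caseLeft_push {v w : Tm} (h : EqvTm (antSet (caseLeftPrem Γ Δ a b c y)) v w) :
    EqvTm (insert (Fm.eq a .zero) (insert (Fm.eq b c) (antSet ⟨insert (.add2 a b c) Γ, Δ⟩)))
      (v.subst (sub1 y b)) (w.subst (sub1 y b)) := by
  have hP := hy _ (Finset.mem_insert_self _ _)
  have fixes {w : Tm} (hw : w.fv ⊆ (Fm.add2 a b c).fv) : w.subst (sub1 y b) = w :=
    Tm.subst_sub1_eq_self fun h => hP (hw h)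
  refine EqvTm.subst (fun p q hpq => ?_) h
  simp only [antSet_mk, Finset.coe_insert, Set.mem_insert_iff, Fm.eq.injEq,
    Finset.mem_coe] at hpq
  rcases hpq with ⟨rfl, rfl⟩ | ⟨rfl, rfl⟩ | ⟨rfl, rfl⟩ | hΓ
  · rw [fixes (by intro; simp_all [Fm.fv])]
    exact .base (Set.mem_insert _ _)
  · rw [fixes (by intro; simp_all [Fm.fv])]
    simpa [Tm.subst, sub1] using EqvTm.refl _
  · rw [fixes (by intro; simp_all [Fm.fv])]
    simpa [Tm.subst, sub1] using (EqvTm.base (Set.mem_insert_of_mem _ (Set.mem_insert _ _))).symm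
  · have hψ := hy (Fm.eq p q) (by simp [hΓ])
    rw [Tm.subst_sub1_eq_self fun h => hψ (by simp [Fm.fv, h]),
      Tm.subst_sub1_eq_self fun h => hψ (by simp [Fm.fv, h])]
    exact .base (by simp [hΓ])

lemma caseLeft_eqvTm (hsep : Separated ⟨insert (.add2 a b c) Γ, Δ⟩) {t u : Tm} {n m : ℕ}
    (h : EqvTm (antSet (caseLeftPrem Γ Δ a b c y)) (sIter n t) (sIter m u))
    (ht : y ∉ t.fv) (hu : y ∉ u.fv)
    (hA0 : ¬ LinkedA0 (antSet ⟨insert (.add2 a b c) Γ, Δ⟩) a t ∨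
      ¬ LinkedA0 (antSet ⟨insert (.add2 a b c) Γ, Δ⟩) a u)
    (hBC : ¬ LinkedBC (antSet ⟨insert (.add2 a b c) Γ, Δ⟩) b c t ∨
      ¬ LinkedBC (antSet ⟨insert (.add2 a b c) Γ, Δ⟩) b c u) :
    EqvTm (antSet ⟨insert (.add2 a b c) Γ, Δ⟩) (sIter n t) (sIter m u) := by
  have hAB (v : Tm) (hA : LinkedA0 (antSet ⟨insert (.add2 a b c) Γ, Δ⟩) a v)
      (hB : LinkedBC (antSet ⟨insert (.add2 a b c) Γ, Δ⟩) b c v) : False := by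
    have hb := snd_mem_BCset_of_add2 (S := ⟨_, Δ⟩) (Finset.mem_insert_self (Fm.add2 a b c) Γ)
    have hc := thd_mem_BCset_of_add2 (S := ⟨_, Δ⟩) (Finset.mem_insert_self (Fm.add2 a b c) Γ)
    rcases hB with hB | hB
    · exact not_linkedA0_of_mem_BCset hsep hb (hA.imp hB.symm.trans hB.symm.trans)
    · exact not_linkedA0_of_mem_BCset hsep hc (hA.imp hB.symm.trans hB.symm.trans)
  have hpush := caseLeft_push hy h
  rw [Tm.subst_sub1_eq_self (by rwa [Tm.fv_sIter]),
    Tm.subst_sub1_eq_self (by rwa [Tm.fv_sIter])] at hpush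
  rcases mergedEqv_of_eqvTm hAB hpush with he | ⟨h1, h2⟩ | ⟨h1, h2⟩
  · exact he
  · rw [linkedA0_sIter_iff] at h1 h2
    exact (hA0.elim (· h1) (· h2)).elim
  · rw [linkedBC_sIter_iff] at h1 h2
    exact (hBC.elim (· h1) (· h2)).elim

lemma notMem_fv_args_of_add2_mem {A B C : Tm} (hm : Fm.add2 A B C ∈ insert (.add2 a b c) Γ) :
    y ∉ A.fv ∧ y ∉ B.fv ∧ y ∉ C.fv := by
  simpa [Fm.fv, not_or, and_assoc] using
    hy (Fm.add2 A B C) (Finset.insert_subset_insert _ Finset.subset_union_left hm)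

lemma notMem_fv_args_of_add1_mem {A B C : Tm} (hm : Fm.add1 A B C ∈ Δ) :
    y ∉ A.fv ∧ y ∉ B.fv ∧ y ∉ C.fv := by
  simpa [Fm.fv, not_or, and_assoc] using hy (Fm.add1 A B C) (by simp [hm])

lemma caseLeft_Aset {t : Tm} (ht : t ∈ Aset (caseLeftPrem Γ Δ a b c y)) :
    t ∈ Aset ⟨insert (.add2 a b c) Γ, Δ⟩ ∧ y ∉ t.fv := by
  rcases ht with ⟨B, C, hm⟩ | ⟨B, C, hm⟩ | rfl
  · simp only [Finset.mem_insert, reduceCtorEq, false_or] at hm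
    exact ⟨mem_Aset_of_add2 (S := ⟨_, Δ⟩) (Finset.mem_insert_of_mem hm),
      (notMem_fv_args_of_add2_mem hy (Finset.mem_insert_of_mem hm)).1⟩
  · exact ⟨mem_Aset_of_add1 (S := ⟨_, Δ⟩) hm, (notMem_fv_args_of_add1_mem hy hm).1⟩
  · exact ⟨zero_mem_Aset _, by simp [Tm.fv]⟩

lemma caseLeft_BCset {u : Tm} (hu : u ∈ BCset (caseLeftPrem Γ Δ a b c y)) :
    u ∈ BCset ⟨insert (.add2 a b c) Γ, Δ⟩ ∧ y ∉ u.fv := by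
  rcases hu with ⟨A, C, hm⟩ | ⟨A, B, hm⟩ | ⟨A, C, hm⟩ | ⟨A, B, hm⟩
  · simp only [Finset.mem_insert, reduceCtorEq, false_or] at hm
    exact ⟨snd_mem_BCset_of_add2 (S := ⟨_, Δ⟩) (Finset.mem_insert_of_mem hm),
      (notMem_fv_args_of_add2_mem hy (Finset.mem_insert_of_mem hm)).2.1⟩
  · simp only [Finset.mem_insert, reduceCtorEq, false_or] at hm
    exact ⟨thd_mem_BCset_of_add2 (S := ⟨_, Δ⟩) (Finset.mem_insert_of_mem hm),
      (notMem_fv_args_of_add2_mem hy (Finset.mem_insert_of_mem hm)).2.2⟩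
  · exact ⟨snd_mem_BCset_of_add1 (S := ⟨_, Δ⟩) hm, (notMem_fv_args_of_add1_mem hy hm).2.1⟩
  · exact ⟨thd_mem_BCset_of_add1 (S := ⟨_, Δ⟩) hm, (notMem_fv_args_of_add1_mem hy hm).2.2⟩

lemma caseLeft_Cset {u : Tm} (hu : u ∈ Cset (caseLeftPrem Γ Δ a b c y)) :
    u ∈ Cset ⟨insert (.add2 a b c) Γ, Δ⟩ ∧ y ∉ u.fv := by
  rcases hu with ⟨A, B, hm⟩ | ⟨A, B, hm⟩
  · simp only [Finset.mem_insert, reduceCtorEq, false_or] at hm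
    exact ⟨mem_Cset_of_add2 (S := ⟨_, Δ⟩) (Finset.mem_insert_of_mem hm),
      (notMem_fv_args_of_add2_mem hy (Finset.mem_insert_of_mem hm)).2.2⟩
  · exact ⟨mem_Cset_of_add1 (S := ⟨_, Δ⟩) hm, (notMem_fv_args_of_add1_mem hy hm).2.2⟩

lemma caseLeft_B1 {t : Tm} (ht : t ∈ B1 (caseLeftPrem Γ Δ a b c y)) :
    t ∈ B1 ⟨insert (.add2 a b c) Γ, Δ⟩ ∧ y ∉ t.fv := by
  obtain ⟨A, C, hm⟩ := ht
  exact ⟨⟨A, C, hm⟩, (notMem_fv_args_of_add1_mem hy hm).2.1⟩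

lemma separated_caseLeft (hsep : Separated ⟨insert (.add2 a b c) Γ, Δ⟩) :
    Separated (caseLeftPrem Γ Δ a b c y) := by
  rintro t ht u hu ⟨n, m, he⟩
  obtain ⟨ht, hyt⟩ := caseLeft_Aset hy ht
  obtain ⟨hu, hyu⟩ := caseLeft_BCset hy hu
  exact hsep t ht u hu ⟨n, m, caseLeft_eqvTm hy hsep he hyt hyu
    (Or.inr (not_linkedA0_of_mem_BCset hsep hu)) (Or.inl (not_linkedBC_of_mem_Aset hsep ht))⟩

lemma indexSequent_caseLeft (hsep : Separated ⟨insert (.add2 a b c) Γ, Δ⟩)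
    (hIS : IndexSequent ⟨insert (.add2 a b c) Γ, Δ⟩)
    (hbot : IndexBot ⟨insert (.add2 a b c) Γ, Δ⟩ b) :
    IndexSequent (caseLeftPrem Γ Δ a b c y) := by
  constructor
  · rintro t ht u hu ⟨n, m, he⟩
    obtain ⟨ht, hyt⟩ := caseLeft_B1 hy ht
    obtain ⟨hu, hyu⟩ := caseLeft_Cset hy hu
    exact hIS.1 t ht u hu ⟨n, m, caseLeft_eqvTm hy hsep he hyt hyu
      (Or.inl (not_linkedA0_of_mem_BCset hsep (mem_BCset_of_mem_B1 ht)))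
      (Or.inl (not_linkedBC_of_mem_B1 hIS hbot ht))⟩
  · intro b₁ hb₁ b₂ hb₂ n m he
    obtain ⟨hb₁, hyb₁⟩ := caseLeft_B1 hy hb₁
    obtain ⟨hb₂, hyb₂⟩ := caseLeft_B1 hy hb₂
    exact hIS.2 b₁ hb₁ b₂ hb₂ n m (caseLeft_eqvTm hy hsep he hyb₁ hyb₂
      (Or.inl (not_linkedA0_of_mem_BCset hsep (mem_BCset_of_mem_B1 hb₁)))
      (Or.inl (not_linkedBC_of_mem_B1 hIS hbot hb₁)))

lemma hasIndex_caseLeft (hsep : Separated ⟨insert (.add2 a b c) Γ, Δ⟩)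
    (hIS : IndexSequent ⟨insert (.add2 a b c) Γ, Δ⟩)
    (hbot : IndexBot ⟨insert (.add2 a b c) Γ, Δ⟩ b) {b₀ : Tm}
    (hb₀ : b₀ ∈ BCset ⟨insert (.add2 a b c) Γ, Δ⟩) (hyb₀ : y ∉ b₀.fv) {ι : ℤ}
    (h : HasIndex (caseLeftPrem Γ Δ a b c y) b₀ ι) :
    HasIndex ⟨insert (.add2 a b c) Γ, Δ⟩ b₀ ι := by
  obtain ⟨A, B, C, hm, n, m, he, rfl⟩ := h
  obtain ⟨hB, hyB⟩ := caseLeft_B1 hy ⟨A, C, hm⟩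
  exact ⟨A, B, C, hm, n, m, caseLeft_eqvTm hy hsep he hyb₀ hyB
    (Or.inl (not_linkedA0_of_mem_BCset hsep hb₀)) (Or.inr (not_linkedBC_of_mem_B1 hIS hbot hB)),
    rfl⟩

end CaseLeft

lemma not_wellShaped_of_ant {Γ Δ : Finset Fm} {φ : Fm} (hφ : ¬ φ.IsEqOrAdd2) :
    ¬ WellShaped ⟨insert φ Γ, Δ⟩ :=
  fun h => hφ (h.1 φ (Finset.mem_insert_self _ _))

lemma not_wellShaped_of_suc {Γ Δ : Finset Fm} {φ : Fm} (hφ : ¬ φ.IsAdd1) :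
    ¬ WellShaped ⟨Γ, insert φ Δ⟩ :=
  fun h => hφ (h.2 φ (Finset.mem_insert_self _ _))

lemma allowedRule_of_inf {r : Rule} {S : Seq} {prems : List Seq} (hinf : Inf r S prems)
    (hS : WellShaped S) (hcut : ∀ φ, r ≠ .cut φ) (heqL : ∀ v1 v2 t u, r ≠ .eqL v1 v2 t u) :
    allowedRule r := by
  cases hinf with
  | ax h =>
    obtain ⟨φ, hφ⟩ := h
    obtain ⟨hΓ, hΔ⟩ := Finset.mem_inter.mp hφ
    obtain ⟨a, b, c, rfl⟩ := hS.2 φ hΔ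
    simpa [Fm.IsEqOrAdd2] using hS.1 _ hΓ
  | cut => exact absurd rfl (hcut _)
  | eqL => exact absurd rfl (heqL _ _ _ _)
  | weak | subst | eqLa | add1R1 | add1R2 | caseAdd2 => simp [allowedRule]
  | negL | andL | orL | impL | allL | exL | caseAdd1 =>
    exact absurd hS (not_wellShaped_of_ant (by simp [Fm.IsEqOrAdd2]))
  | _ => exact absurd hS (not_wellShaped_of_suc (by simp [Fm.IsAdd1]))

lemma wellShaped_eqLa {Γ Δ : Finset Fm} {t u : Tm} {θ θ' : ℕ → Tm}
    (h : WellShaped ⟨insert (.eq t u) (Γ.image (Fm.subst θ)), Δ.image (Fm.subst θ)⟩) :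
    WellShaped ⟨insert (.eq t u) (Γ.image (Fm.subst θ')), Δ.image (Fm.subst θ')⟩ := by
  simp only [WellShaped, Finset.mem_insert, Finset.mem_image, forall_eq_or_imp,
    forall_exists_index, and_imp, forall_apply_eq_imp_iff₂, Fm.isEqOrAdd2_subst_iff,
    Fm.isAdd1_subst_iff] at h ⊢
  exact h

lemma wellShaped_caseLeftPrem {Γ Δ : Finset Fm} {a b c : Tm} {y : ℕ}
    (h : WellShaped ⟨insert (.add2 a b c) Γ, Δ⟩) : WellShaped (caseLeftPrem Γ Δ a b c y) := by
  refine ⟨fun φ hφ => ?_, h.2⟩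
  simp only [Finset.mem_insert] at hφ
  rcases hφ with rfl | rfl | rfl | hφ
  iterate 3 exact Or.inl ⟨_, _, rfl⟩
  exact h.1 φ (Finset.mem_insert_of_mem hφ)

lemma wellShaped_caseRightPrem {Γ Δ : Finset Fm} {a b c : Tm} {x y z : ℕ}
    (h : WellShaped ⟨insert (.add2 a b c) Γ, Δ⟩) :
    WellShaped (caseRightPrem Γ Δ a b c x y z) := by
  refine ⟨fun φ hφ => ?_, h.2⟩
  simp only [Finset.mem_insert] at hφ
  rcases hφ with rfl | rfl | rfl | rfl | hφ
  iterate 3 exact Or.inl ⟨_, _, rfl⟩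
  · exact Or.inr ⟨_, _, _, rfl⟩
  exact h.1 φ (Finset.mem_insert_of_mem hφ)

section Step

variable {r : Rule} {S : Seq} {prems : List Seq}

lemma goalInvariant_of_mem_premises (hinf : Inf r S prems) (hr : allowedRule r)
    (hS : GoalInvariant S) {S' : Seq} (hS' : S' ∈ prems) : GoalInvariant S' := by
  cases hinf with
  | weak hΓ hΔ =>
    obtain rfl := List.mem_singleton.mp hS'
    exact ⟨⟨fun φ hφ => hS.wellShaped.1 φ (hΓ hφ), fun φ hφ => hS.wellShaped.2 φ (hΔ hφ)⟩,
      (embeds_weak hΓ hΔ).separated hS.separated⟩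
  | subst =>
    obtain rfl := List.mem_singleton.mp hS'
    exact ⟨wellShaped_image_iff.mp hS.wellShaped, embeds_subst.separated hS.separated⟩
  | eqLa =>
    obtain rfl := List.mem_singleton.mp hS'
    exact ⟨wellShaped_eqLa hS.wellShaped, embeds_eqLa.separated hS.separated⟩
  | add1R2 =>
    obtain rfl := List.mem_singleton.mp hS'
    refine ⟨⟨hS.wellShaped.1, fun φ hφ => ?_⟩, embeds_add1R2.separated hS.separated⟩
    rcases Finset.mem_insert.mp hφ with rfl | hφ
    · exact ⟨_, _, _, rfl⟩
    · exact hS.wellShaped.2 φ (Finset.mem_insert_of_mem hφ)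
  | caseAdd2 hxy hxz hyz hfr =>
    have hf : CaseAdd2Fresh _ _ _ _ _ _ _ _ := ⟨hxy, hxz, hyz, hfr⟩
    rcases List.mem_pair.mp hS' with rfl | rfl
    · exact ⟨wellShaped_caseLeftPrem hS.wellShaped, separated_caseLeft hf.y_fresh hS.separated⟩
    · exact ⟨wellShaped_caseRightPrem hS.wellShaped, separated_caseRight hf hS.separated⟩
  | add1R1 | ax => simp at hS'
  | _ => simp [allowedRule] at hr

lemma indexSequent_premise (hinf : Inf r S prems) (hr : allowedRule r) (hsep : Separated S)
    (hIS : IndexSequent S) {j : ℕ} (hj : j < prems.length)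
    (hsw : ∀ a b c x y z, r = .caseAdd2 a b c x y z → j = 0 → IndexBot S b) :
    IndexSequent (prems.get ⟨j, hj⟩) := by
  cases hinf with
  | weak hΓ hΔ =>
    obtain rfl : j = 0 := by simpa using hj
    exact (embeds_weak hΓ hΔ).indexSequent hIS
  | subst =>
    obtain rfl : j = 0 := by simpa using hj
    exact embeds_subst.indexSequent hIS
  | eqLa =>
    obtain rfl : j = 0 := by simpa using hj
    exact embeds_eqLa.indexSequent hIS
  | add1R2 =>
    obtain rfl : j = 0 := by simpa using hj
    exact embeds_add1R2.indexSequent hIS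
  | caseAdd2 hxy hxz hyz hfr =>
    have hf : CaseAdd2Fresh _ _ _ _ _ _ _ _ := ⟨hxy, hxz, hyz, hfr⟩
    match j, hj with
    | 0, _ => exact indexSequent_caseLeft hf.y_fresh hsep hIS (hsw _ _ _ _ _ _ rfl rfl)
    | 1, _ => exact indexSequent_caseRight hf hIS
  | add1R1 | ax => simp at hj
  | _ => simp [allowedRule] at hr

lemma hasIndex_conclusion_of_not_progStep (hinf : Inf r S prems) (hr : allowedRule r)
    (hsep : Separated S) (hIS : IndexSequent S) {j : ℕ} (hj : j < prems.length)
    (hsw : ∀ a b c x y z, r = .caseAdd2 a b c x y z → j = 0 → IndexBot S b)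
    {a b c a' b' c' : Tm} (hτ : Fm.add2 a b c ∈ S.ant)
    (hconn : connStep r j (.add2 a b c) (.add2 a' b' c'))
    (hnp : ¬ progStep r j (.add2 a b c) (.add2 a' b' c')) {ι : ℤ}
    (h : HasIndex (prems.get ⟨j, hj⟩) b' ι) : HasIndex S b ι := by
  cases hinf with
  | weak hΓ hΔ =>
    obtain rfl : j = 0 := by simpa using hj
    obtain ⟨-, rfl, -⟩ := Fm.add2.inj hconn
    simpa using (embeds_weak hΓ hΔ).hasIndex h
  | subst =>
    obtain rfl : j = 0 := by simpa using hj
    obtain ⟨-, rfl, -⟩ := Fm.add2.inj hconn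
    exact embeds_subst.hasIndex h
  | eqLa =>
    obtain rfl : j = 0 := by simpa using hj
    obtain ⟨F, hF, hF'⟩ := hconn
    obtain ⟨A, B, C, rfl, -, rfl, -⟩ := Fm.exists_of_subst_eq_add2 hF.symm
    obtain ⟨-, rfl, -⟩ := Fm.add2.inj hF'
    refine HasIndex.congr ?_ (by simpa using embeds_eqLa.hasIndex h)
    exact (EqvTm.subst_swap (Finset.mem_insert_self _ _) B).symm
  | add1R2 =>
    obtain rfl : j = 0 := by simpa using hj
    obtain ⟨-, rfl, -⟩ := Fm.add2.inj hconn
    simpa using embeds_add1R2.hasIndex h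
  | caseAdd2 hxy hxz hyz hfr =>
    have hf : CaseAdd2Fresh _ _ _ _ _ _ _ _ := ⟨hxy, hxz, hyz, hfr⟩
    obtain ⟨-, rfl, -⟩ := Fm.add2.inj (hconn.resolve_right hnp)
    match j, hj with
    | 0, _ =>
      exact hasIndex_caseLeft hf.y_fresh hsep hIS (hsw _ _ _ _ _ _ rfl rfl)
        (snd_mem_BCset_of_add2 hτ) (notMem_fv_args_of_add2_mem hf.y_fresh hτ).2.1 h
    | 1, _ => exact hasIndex_caseRight hf (readBack_add2_args hf hτ).2.1 h
  | add1R1 | ax => simp at hj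
  | _ => simp [allowedRule] at hr

lemma hasIndex_conclusion_of_progStep (hinf : Inf r S prems) {j : ℕ} (hj : j < prems.length)
    {a b c a' b' c' : Tm} (hp : progStep r j (.add2 a b c) (.add2 a' b' c')) {ι : ℤ}
    (h : HasIndex (prems.get ⟨j, hj⟩) b' ι) : HasIndex S b (ι - 1) := by
  cases hinf with
  | caseAdd2 hxy hxz hyz hfr =>
    have hf : CaseAdd2Fresh _ _ _ _ _ _ _ _ := ⟨hxy, hxz, hyz, hfr⟩
    obtain ⟨hτ, rfl, hτ'⟩ := hp
    obtain ⟨rfl, rfl, rfl⟩ := Fm.add2.inj hτ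
    obtain ⟨-, rfl, -⟩ := Fm.add2.inj hτ'
    refine (hasIndex_caseRight hf ?_ h).of_s
    simp [readBack, sub2, hf.xy.symm]
  | caseAdd1 => exact absurd hp.1 (by simp)
  | _ => exact hp.elim

end Step

lemma goalInvariant_goalSeq : GoalInvariant goalSeq := by
  refine ⟨⟨by simp [goalSeq, Fm.IsEqOrAdd2], by simp [goalSeq, Fm.IsAdd1]⟩, ?_⟩
  rintro t ht u hu ⟨n, m, he⟩
  have heq := EqvTm.eq_of_forall_eq_notMem (by simp [goalSeq, antSet]) he
  have ht' : t = .var 0 ∨ t = .zero := by simpa [Aset, goalSeq, eq_comm] using ht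
  have hu' : u = .var 1 ∨ u = .var 2 := by simp [BCset, goalSeq] at hu; tauto
  rcases ht' with rfl | rfl <;> rcases hu' with rfl | rfl
  · exact absurd (sIter_var_injective heq).2 (by decide)
  · exact absurd (sIter_var_injective heq).2 (by decide)
  · exact sIter_var_ne_sIter_zero _ _ _ heq.symm
  · exact sIter_var_ne_sIter_zero _ _ _ heq.symm

namespace PreProof

variable (P : PreProof)

open Classical in
noncomputable def jump (π : List ℕ) : List ℕ := if budAt P.D.label π then P.C π else π

/-- The node of `P.D` that a node of the tree-unfolding is a copy of. -/
noncomputable def resolve (σ : List ℕ) : List ℕ := σ.foldl (fun π i => P.jump (π ++ [i])) []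

variable {P}

lemma resolve_append_singleton (σ : List ℕ) (i : ℕ) :
    P.resolve (σ ++ [i]) = P.jump (P.resolve σ ++ [i]) := by
  simp [resolve]

lemma label_append_eq_none_of_bud {σ : List ℕ} {S : Seq} (h : P.D.label σ = some (S, .bud))
    {ρ : List ℕ} (hρ : ρ ≠ []) : P.D.label (σ ++ ρ) = none := by
  obtain ⟨i, ρ, rfl⟩ := List.exists_cons_of_ne_nil hρ
  rcases P.D.wf σ S .bud h with ⟨_, hnone⟩ | ⟨hne, _⟩
  · by_contra hcon
    exact P.D.prefix_closed (σ ++ [i]) ρ (by simpa using hcon) (hnone i)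
  · exact absurd rfl hne

lemma not_budAt_of_prefix {σ α : List ℕ} (hσ : P.D.label σ ≠ none) (hpre : α <+: σ)
    (hne : α ≠ σ) : ¬ budAt P.D.label α := by
  rintro ⟨S, hS⟩
  obtain ⟨ρ, rfl⟩ := hpre
  exact hσ (label_append_eq_none_of_bud hS (by rintro rfl; simp at hne))

lemma CycleNormal.companion_lt (hcn : P.CycleNormal) {σ : List ℕ} {S : Seq}
    (h : P.D.label σ = some (S, .bud)) : P.C σ <+: σ ∧ (P.C σ).length < σ.length := by
  have hpre := hcn σ S h
  refine ⟨hpre, lt_of_le_of_ne hpre.length_le fun hlen => ?_⟩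
  obtain ⟨r, hr, hrne⟩ := P.comp σ S h
  rw [hpre.eq_of_length hlen, h] at hr
  exact hrne (by cases hr; rfl)

lemma CycleNormal.not_budAt_nil (hcn : P.CycleNormal) : ¬ budAt P.D.label [] :=
  fun ⟨_, hS⟩ => by simpa using (hcn.companion_lt hS).2

lemma resolve_eq_self {σ : List ℕ} (h : ∀ α, α <+: σ → ¬ budAt P.D.label α) :
    P.resolve σ = σ := by
  induction σ using List.reverseRecOn with
  | nil => rfl
  | append_singleton σ i ih =>
    rw [resolve_append_singleton, ih fun α hα => h α (hα.trans (List.prefix_append σ [i])),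
      jump, if_neg (h _ (List.prefix_refl _))]

lemma CycleNormal.resolve_of_budAt (hcn : P.CycleNormal) {σ : List ℕ}
    (hb : budAt P.D.label σ) : P.resolve σ = P.C σ := by
  obtain ⟨S, hS⟩ := hb
  have hσ : P.D.label σ ≠ none := by simp [hS]
  cases σ using List.reverseRecOn with
  | nil => exact absurd ⟨S, hS⟩ hcn.not_budAt_nil
  | append_singleton σ i =>
    rw [resolve_append_singleton, resolve_eq_self fun α hα => not_budAt_of_prefix hσ
      (hα.trans (List.prefix_append σ [i])) fun he => by simpa [he] using hα.length_le,
      jump, if_pos ⟨S, hS⟩]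

lemma CycleNormal.resolve_companion (hcn : P.CycleNormal) {σ : List ℕ} {S : Seq}
    (hS : P.D.label σ = some (S, .bud)) : P.resolve (P.C σ) = P.C σ := by
  obtain ⟨hpre, hlt⟩ := hcn.companion_lt hS
  refine resolve_eq_self fun α hα => not_budAt_of_prefix (by simp [hS]) (hα.trans hpre) ?_
  rintro rfl
  exact absurd hα.length_le (by omega)

lemma resolve_append_congr {σ σ' : List ℕ} (h : P.resolve σ = P.resolve σ') (ρ : List ℕ) :
    P.resolve (σ ++ ρ) = P.resolve (σ' ++ ρ) := by
  induction ρ using List.reverseRecOn with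
  | nil => simpa using h
  | append_singleton ρ i ih =>
    rw [← List.append_assoc, ← List.append_assoc, resolve_append_singleton,
      resolve_append_singleton, ih]

lemma CycleNormal.not_budAt_resolve (hcn : P.CycleNormal) (σ : List ℕ) :
    ¬ budAt P.D.label (P.resolve σ) := by
  induction σ using List.reverseRecOn with
  | nil => exact hcn.not_budAt_nil
  | append_singleton σ i ih =>
    rw [resolve_append_singleton, jump]
    split_ifs with hb
    · obtain ⟨S, hS⟩ := hb
      obtain ⟨r, hr, hrne⟩ := P.comp _ _ hS
      rintro ⟨S', hS'⟩
      rw [hr] at hS'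
      exact hrne (by cases hS'; rfl)
    · exact hb

variable {T : Lbl}

lemma CycleNormal.unfolding_eq (hcn : P.CycleNormal) (hT : IsUnfolding P T) (σ : List ℕ) :
    T σ = P.D.label (P.resolve σ) := by
  obtain ⟨hT₁, hT₂, hT₃⟩ := hT
  induction h : σ.length using Nat.strong_induction_on generalizing σ with
  | _ n ih =>
    subst h
    by_cases hb : ∃ σ₁, σ₁ <+: σ ∧ budAt P.D.label σ₁
    · obtain ⟨σ₁, ⟨ρ, rfl⟩, S, hS⟩ := hb
      have hlt := (hcn.companion_lt hS).2
      rw [hT₂ σ₁ ρ ⟨S, hS⟩, ih _ (by simp; omega) _ rfl,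
        resolve_append_congr ((hcn.resolve_of_budAt ⟨S, hS⟩).trans
          (hcn.resolve_companion hS).symm) ρ]
    · push Not at hb
      rw [resolve_eq_self hb]
      by_cases hn : P.D.label σ = none
      · rw [hn]
        exact hT₃ σ hn hb
      · exact hT₁ σ hn (hb σ (List.prefix_refl _))

lemma CycleNormal.unfolding_unique (hcn : P.CycleNormal) {T' : Lbl} (hT : IsUnfolding P T)
    (hT' : IsUnfolding P T') : T = T' :=
  funext fun σ => (hcn.unfolding_eq hT σ).trans (hcn.unfolding_eq hT' σ).symm

lemma exists_label_jump {π : List ℕ} {S : Seq} {r : Rule} (h : P.D.label π = some (S, r)) :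
    ∃ r', P.D.label (P.jump π) = some (S, r') := by
  unfold jump
  split_ifs with hb
  · obtain ⟨S', hS'⟩ := hb
    obtain ⟨r', hr', -⟩ := P.comp _ _ hS'
    rw [h] at hS'
    cases hS'
    exact ⟨r', hr'⟩
  · exact ⟨r, h⟩

lemma label_jump_eq_none {π : List ℕ} (h : P.D.label π = none) : P.D.label (P.jump π) = none := by
  rw [jump, if_neg fun ⟨_, hS⟩ => by simp [h] at hS, h]

lemma CycleNormal.unfolding_childrenOK (hcn : P.CycleNormal) (hT : IsUnfolding P T)
    {σ : List ℕ} {prems : List Seq} (h : childrenOK P.D.label (P.resolve σ) prems) :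
    childrenOK T σ prems := by
  refine ⟨fun i => ?_, fun i hi => ?_⟩
  · obtain ⟨r, hr⟩ := h.1 i
    rw [hcn.unfolding_eq hT, resolve_append_singleton]
    exact exists_label_jump hr
  · rw [hcn.unfolding_eq hT, resolve_append_singleton]
    exact label_jump_eq_none (h.2 i hi)

lemma unfolding_range_finite (hcn : P.CycleNormal) (hT : IsUnfolding P T) :
    (Set.range T).Finite := by
  refine (((P.fin.image P.D.label).insert none).subset ?_)
  rintro _ ⟨σ, rfl⟩
  rw [hcn.unfolding_eq hT]
  by_cases h : P.D.label (P.resolve σ) = none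
  · exact Or.inl h
  · exact Or.inr ⟨_, h, rfl⟩

end PreProof

def InvariantDerivation (f : Lbl) : Prop :=
  ∀ σ S r, f σ = some (S, r) →
    GoalInvariant S ∧ allowedRule r ∧ ∃ prems, Inf r S prems ∧ childrenOK f σ prems

lemma IsCNProofOfGoal.allowedRule {P : PreProof} (hP : IsCNProofOfGoal P) {σ : List ℕ}
    {S : Seq} {r : Rule} (h : P.D.label σ = some (S, r)) {prems : List Seq}
    (hinf : Inf r S prems) (hS : WellShaped S) : allowedRule r :=
  allowedRule_of_inf hinf hS (fun φ he => hP.2.1 ⟨σ, S, r, h, φ, he⟩)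
    (fun v1 v2 t u he => hP.2.2.1 ⟨σ, S, r, h, v1, v2, t, u, he⟩)

lemma IsCNProofOfGoal.goalInvariant {P : PreProof} (hP : IsCNProofOfGoal P) {σ : List ℕ}
    {S : Seq} {r : Rule} (h : P.D.label σ = some (S, r)) : GoalInvariant S := by
  induction σ using List.reverseRecOn generalizing S r with
  | nil =>
    obtain ⟨r₀, hr₀⟩ := hP.2.2.2.2
    rw [hr₀] at h
    cases h
    exact goalInvariant_goalSeq
  | append_singleton τ j ih =>
    obtain ⟨⟨S', r'⟩, hS'⟩ := Option.ne_none_iff_exists'.mp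
      (P.D.prefix_closed τ [j] (by simp [h]))
    rcases P.D.wf τ S' r' hS' with ⟨_, hnone⟩ | ⟨_, prems, hinf, hch⟩
    · simp [hnone j] at h
    · have hj : j < prems.length := by
        by_contra hj
        simp [hch.2 j (by omega)] at h
      obtain ⟨r₁, hr₁⟩ := hch.1 ⟨j, hj⟩
      rw [hr₁] at h
      cases h
      have hS := ih hS'
      exact goalInvariant_of_mem_premises hinf (hP.allowedRule hS' hinf hS.1) hS
        (List.get_mem prems _)

lemma IsCNProofOfGoal.invariantDerivation {P : PreProof} (hP : IsCNProofOfGoal P) {T : Lbl}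
    (hT : IsUnfolding P T) : InvariantDerivation T := by
  intro σ S r h
  have hcn : P.CycleNormal := hP.2.2.2.1
  rw [hcn.unfolding_eq hT] at h
  have hS := hP.goalInvariant h
  rcases P.D.wf _ _ _ h with ⟨rfl, _⟩ | ⟨_, prems, hinf, hch⟩
  · exact absurd ⟨S, h⟩ (hcn.not_budAt_resolve σ)
  · exact ⟨hS, hP.allowedRule h hinf hS.1, prems, hinf, hcn.unfolding_childrenOK hT hch⟩

lemma InvariantDerivation.exists_premise {f : Lbl} (hf : InvariantDerivation f)
    {σ : List ℕ} {S S' : Seq} {r r' : Rule} {j : ℕ} (h : f σ = some (S, r))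
    (h' : f (σ ++ [j]) = some (S', r')) :
    ∃ prems, Inf r S prems ∧ ∃ hj : j < prems.length, S' = prems.get ⟨j, hj⟩ := by
  obtain ⟨-, -, prems, hinf, hch⟩ := hf σ S r h
  have hj : j < prems.length := by
    by_contra hj
    simp [hch.2 j (by omega)] at h'
  obtain ⟨r'', hr''⟩ := hch.1 ⟨j, hj⟩
  rw [h'] at hr''
  cases hr''
  exact ⟨prems, hinf, hj, rfl⟩

def AtomIndexAt (f : Lbl) (σ : List ℕ) (τ : Fm) (ι : ℤ) : Prop :=
  ∃ S r a b c, f σ = some (S, r) ∧ τ = .add2 a b c ∧ HasIndex S b ι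

lemma AtomIndexAt.unique {f : Lbl} {σ : List ℕ} {τ : Fm} {ι ι' : ℤ}
    (hIS : IndexSequentAt f σ) (h : AtomIndexAt f σ τ ι) (h' : AtomIndexAt f σ τ ι') :
    ι = ι' := by
  obtain ⟨S, r, a, b, c, hσ, rfl, hι⟩ := h
  obtain ⟨S', r', a', b', c', hσ', hτ, hι'⟩ := h'
  obtain ⟨S'', r'', hσ'', hS⟩ := hIS
  rw [hσ] at hσ' hσ''
  cases hσ'
  cases hσ''
  obtain ⟨-, rfl, -⟩ := Fm.add2.inj hτ
  exact hι.unique hS hι'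

lemma IsTraceFrom.exists_add2 {f : Lbl} {p : ℕ → List ℕ} {k : ℕ} {τ : ℕ → Fm}
    (hf : InvariantDerivation f) (hτ : IsTraceFrom f p k τ) {i : ℕ} (hi : k ≤ i) :
    ∃ a b c, τ i = .add2 a b c := by
  obtain ⟨S, r, j, hS, hmem, hatom, -⟩ := hτ i hi
  rcases hatom with ⟨a, b, c, he⟩ | h
  · obtain ⟨hG, -⟩ := hf _ _ _ hS
    simpa [he, Fm.IsEqOrAdd2] using hG.1.1 _ hmem
  · exact h

lemma AtomIndexAt.of_label_eq {f : Lbl} {σ σ' : List ℕ} {τ : Fm} {ι : ℤ} (h : f σ = f σ')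
    (hσ' : AtomIndexAt f σ' τ ι) : AtomIndexAt f σ τ ι := by
  obtain ⟨S, r, a, b, c, hS, hτ, hι⟩ := hσ'
  exact ⟨S, r, a, b, c, h.trans hS, hτ, hι⟩

section IndexPath

variable {f : Lbl} {p : ℕ → List ℕ}

lemma IsInfIndexPath.indexBot (hp : IsInfIndexPath f p) {i : ℕ} {S : Seq} {a b c : Tm}
    {x y z : ℕ} (hS : f (p i) = some (S, .caseAdd2 a b c x y z)) (h0 : p (i + 1) = p i ++ [0]) :
    IndexBot S b := by
  obtain ⟨S', a', b', c', x', y', z', hS', hbot⟩ := hp.2.2 i ⟨S, a, b, c, x, y, z, hS⟩ h0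
  rw [hS] at hS'
  cases hS'
  exact hbot

lemma exists_atomIndexAt_of_progAt {τ : ℕ → Fm} (hf : InvariantDerivation f) {i : ℕ}
    (hsw : ¬ (SwitchingPoint f (p i) ∧ p (i + 1) = p i ++ [1])) (hpa : progAt f p τ i) :
    ∃ ι, AtomIndexAt f (p i) (τ i) ι := by
  obtain ⟨S, r, j, hS, hj, hps⟩ := hpa
  cases r
  case caseAdd2 a b c x y z =>
    obtain ⟨hτi, rfl, -⟩ := hps
    have hbot : ¬ IndexBot S b := fun hbot => hsw ⟨⟨S, a, b, c, x, y, z, hS, hbot⟩, hj⟩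
    simp only [IndexBot, not_forall, not_not] at hbot
    obtain ⟨a', b', c', hm, n, m, he⟩ := hbot
    exact ⟨m - n, S, _, a, b, c, hS, hτi, a', b', c', hm, n, m, he, rfl⟩
  case caseAdd1 => simpa [allowedRule] using (hf _ _ _ hS).2.1
  all_goals exact hps.elim

lemma progAt_trace_eq {τ : ℕ → Fm} {i i' : ℕ} (hpa : progAt f p τ i) (hpa' : progAt f p τ i')
    (heq : f (p i) = f (p i')) : τ i = τ i' := by
  obtain ⟨S, r, j, hS, -, hps⟩ := hpa
  obtain ⟨S', r', j', hS', -, hps'⟩ := hpa'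
  rw [heq, hS'] at hS
  cases hS
  cases r <;> first | exact hps.1.trans hps'.1.symm | exact hps.elim

variable (hf : InvariantDerivation f) (hp : IsInfIndexPath f p)
include hf hp

lemma IsInfIndexPath.indexSequentAt (i : ℕ) : IndexSequentAt f (p i) := by
  induction i with
  | zero => exact hp.2.1
  | succ i ih =>
    obtain ⟨S, r, hS, hIS⟩ := ih
    obtain ⟨⟨S', r'⟩, hS'⟩ := Option.ne_none_iff_exists'.mp (hp.1.1 (i + 1))
    obtain ⟨j, hj⟩ := hp.1.2 i
    rw [hj] at hS'
    obtain ⟨prems, hinf, hjlt, rfl⟩ := hf.exists_premise hS hS'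
    obtain ⟨hG, hr, -⟩ := hf _ _ _ hS
    refine ⟨_, r', by rw [hj, hS'], indexSequent_premise hinf hr hG.separated hIS hjlt ?_⟩
    rintro a b c x y z rfl rfl
    exact hp.indexBot hS hj

variable {k : ℕ} {τ : ℕ → Fm} (hτ : IsTraceFrom f p k τ)
include hτ

lemma AtomIndexAt.trace_pred {i : ℕ} (hi : k ≤ i) {ι : ℤ}
    (h : AtomIndexAt f (p (i + 1)) (τ (i + 1)) ι) :
    (progAt f p τ i → AtomIndexAt f (p i) (τ i) (ι - 1)) ∧
      (¬ progAt f p τ i → AtomIndexAt f (p i) (τ i) ι) := by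
  obtain ⟨S, r, j, hS, hmem, -, hj, hconn⟩ := hτ i hi
  obtain ⟨S', r', a', b', c', hS', hτ', hι⟩ := h
  obtain ⟨a, b, c, hτi⟩ := hτ.exists_add2 hf hi
  rw [hj] at hS'
  obtain ⟨prems, hinf, hjlt, rfl⟩ := hf.exists_premise hS hS'
  rw [hτi, hτ'] at hconn
  rw [hτi] at hmem
  have hprog : progAt f p τ i ↔ progStep r j (.add2 a b c) (.add2 a' b' c') := by
    refine ⟨fun ⟨S₀, r₀, j₀, hS₀, hj₀, hps⟩ => ?_, fun hps => ⟨S, r, j, hS, hj, hτi ▸ hτ' ▸ hps⟩⟩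
    rw [hS] at hS₀
    cases hS₀
    obtain rfl : j₀ = j := by simpa [hj] using hj₀.symm
    rwa [hτi, hτ'] at hps
  obtain ⟨hG, hr, -⟩ := hf _ _ _ hS
  refine ⟨fun hpa => ⟨S, r, a, b, c, hS, hτi,
    hasIndex_conclusion_of_progStep hinf hjlt (hprog.mp hpa) hι⟩,
    fun hnpa => ⟨S, r, a, b, c, hS, hτi, ?_⟩⟩
  obtain ⟨S₀, r₀, hS₀, hIS⟩ := IsInfIndexPath.indexSequentAt hf hp i
  rw [hS] at hS₀
  cases hS₀
  refine hasIndex_conclusion_of_not_progStep hinf hr hG.separated hIS hjlt ?_ hmem hconn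
    (hnpa ∘ hprog.mpr) hι
  rintro a₀ b₀ c₀ x y z rfl rfl
  exact hp.indexBot hS hj

lemma AtomIndexAt.of_trace_le {i : ℕ} (hi : k ≤ i) (d : ℕ) {ι : ℤ}
    (h : AtomIndexAt f (p (i + d)) (τ (i + d)) ι) : ∃ ι' ≤ ι, AtomIndexAt f (p i) (τ i) ι' := by
  induction d generalizing ι with
  | zero => exact ⟨ι, le_rfl, h⟩
  | succ d ih =>
    have hpred := AtomIndexAt.trace_pred hf hp hτ (i := i + d) (by omega) h
    by_cases hpa : progAt f p τ (i + d)
    · obtain ⟨ι', hι', h'⟩ := ih (hpred.1 hpa)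
      exact ⟨ι', by omega, h'⟩
    · exact ih (hpred.2 hpa)

lemma InvariantDerivation.false_of_progAt_of_label_eq
    (hsw : ∀ l, ¬ (SwitchingPoint f (p l) ∧ p (l + 1) = p l ++ [1])) {i i' : ℕ} (hi : k ≤ i)
    (hlt : i < i') (hpa : progAt f p τ i) (hpa' : progAt f p τ i') (heq : f (p i) = f (p i')) :
    False := by
  obtain ⟨ν, hν⟩ := exists_atomIndexAt_of_progAt hf (hsw i') hpa'
  obtain ⟨ι, hιν, hι⟩ := AtomIndexAt.of_trace_le hf hp hτ (i := i + 1) (by omega) (i' - (i + 1))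
    (by rwa [show i + 1 + (i' - (i + 1)) = i' by omega])
  have hpred := (AtomIndexAt.trace_pred hf hp hτ hi hι).1 hpa
  have hsame : AtomIndexAt f (p i) (τ i) ν :=
    AtomIndexAt.of_label_eq heq (progAt_trace_eq hpa hpa' heq ▸ hν)
  have := hpred.unique (IsInfIndexPath.indexSequentAt hf hp i) hsame
  omega

end IndexPath

theorem InvariantDerivation.exists_switchingPoint {f : Lbl} {p : ℕ → List ℕ}
    (hf : InvariantDerivation f) (hfin : (Set.range f).Finite) (hgtc : GTC f)
    (hp : IsInfIndexPath f p) :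
    ∃ l, SwitchingPoint f (p l) ∧ p (l + 1) = p l ++ [1] := by
  by_contra hsw
  obtain ⟨k, τ, hτ, hprog⟩ := hgtc p hp.1
  have hinf : {i | k ≤ i ∧ progAt f p τ i}.Infinite := by
    refine Set.infinite_of_forall_exists_gt fun n => ?_
    obtain ⟨i, hi, hk, hpa⟩ := hprog (n + 1)
    exact ⟨i, ⟨hk, hpa⟩, by omega⟩
  obtain ⟨i, ⟨hi, hpa⟩, i', ⟨hi', hpa'⟩, hne, heq⟩ := hinf.exists_ne_map_eq_of_mapsTo
    (Set.mapsTo_range (fun i => f (p i)) _) (hfin.subset (Set.range_comp_subset_range p f))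
  have hsw' := not_exists.mp hsw
  rcases hne.lt_or_gt with hlt | hlt
  · exact hf.false_of_progAt_of_label_eq hp hτ hsw' hi hlt hpa hpa' heq
  · exact hf.false_of_progAt_of_label_eq hp hτ hsw' hi' hlt hpa' hpa heq.symm

/-- On every infinite index path of the tree-unfolding of a
    cut-free cycle-normal `CLKID^ω_a` proof of `Add2(x,y,z) ⊢ Add1(x,y,z)` there
    is a switching point followed by the right assumption of its (Case Add2). -/
theorem switching_point_on_infinite_index_path (P : PreProof) (hP : IsCNProofOfGoal P)
    (T : Lbl) (hT : IsUnfolding P T)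
    (p : ℕ → List ℕ) (hp : IsInfIndexPath T p) :
    ∃ l : ℕ, SwitchingPoint T (p l) ∧ p (l + 1) = p l ++ [1] := by
  have hcn : P.CycleNormal := hP.2.2.2.1
  obtain ⟨T', hT', hgtc⟩ := hP.1
  rw [← hcn.unfolding_unique hT hT'] at hgtc
  exact (hP.invariantDerivation hT).exists_switchingPoint
    (PreProof.unfolding_range_finite hcn hT) hgtc hp

end CLKID
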